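/- arXiv:1408.0356 — 14 statements merged into one kernel-verified Lean document; each statement's English description precedes it below -/
import Mathlib

section
/- Let u and v be words over a set V of variables. The identity u = v holds in every commutative semigroup satisfying the identity x·x = x·x·x (i.e., in the variety C₂ = var{x² = x³, xy = yx}) if and only if c(u) = c(v) and every letter of c(u) is either simple in both u and v or multiple in both u and v. -/
/-!
A commutative semigroup satisfying `x² = x³` embeds into the commutative monoid `WithOne S`,
where the value of a word is `∏ₓ f x ^ count x`, and `a ^ n = a ^ min n 2` for every `a`; so
the value depends only on the counts truncated at `2`. Conversely, these truncated counts are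
read off in the three-element monoid `{1, a, a²}` with `a² = a³`, by sending one letter to `a`
and all others to `1`.
-/

/-- Value of a word (nonempty list of variables) under an assignment `f : V → S`,
computed as an element of `Option S`: `none` for the empty list, and `some` of the
ordered product of the images of the letters otherwise. -/
def evalWord {V S : Type*} [Mul S] (f : V → S) (w : List V) : Option S :=
  w.foldr (fun x o => some (o.elim (f x) (fun s => f x * s))) none

section Evaluation

variable {V : Type*}

theorem evalWord_eq_prod_coe {S : Type*} [Semigroup S] (f : V → S) (w : List V) :
    evalWord f w = ((w.map fun x => (f x : WithOne S)).prod : WithOne S) := by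
  induction w with
  | nil => rfl
  | cons x w ih =>
    rw [List.map_cons, List.prod_cons, ← ih]
    show some ((evalWord f w).elim _ _) = _
    cases evalWord f w <;> rfl

theorem lift_evalWord {M : Type*} [Monoid M] (f : V → M) (w : List V) :
    WithOne.lift (MulHom.id M) (evalWord f w) = (w.map f).prod := by
  rw [evalWord_eq_prod_coe, map_list_prod, List.map_map]
  rfl

end Evaluation

theorem WithOne.mul_self_eq_mul_self_mul {S : Type*} [Semigroup S]
    (h : ∀ a : S, a * a = a * a * a) (a : WithOne S) : a * a = a * a * a := by
  refine WithOne.cases_on a ?_ fun a => ?_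
  · simp only [mul_one]
  · exact_mod_cast h a

theorem pow_eq_pow_min_two {M : Type*} [Monoid M] (h : ∀ a : M, a * a = a * a * a)
    (a : M) (n : ℕ) : a ^ n = a ^ min n 2 := by
  induction n with
  | zero => rfl
  | succ n ih =>
    rcases Nat.lt_or_ge n 2 with hn | hn
    · rw [min_eq_left (by omega)]
    · rw [pow_succ, ih, min_eq_right hn, min_eq_right (by omega), sq, ← h]

-- The monoid `{1, a, a²}` with `a² = a³`, where `a ^ n` is encoded by `val = min n 2`.
@[ext]
structure TruncTwo where
  val : ℕ
  le_two : val ≤ 2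

namespace TruncTwo

instance : One TruncTwo := ⟨⟨0, zero_le_two⟩⟩

instance : Mul TruncTwo := ⟨fun a b => ⟨min (a.val + b.val) 2, min_le_right _ _⟩⟩

theorem val_one : (1 : TruncTwo).val = 0 := rfl

theorem val_mul (a b : TruncTwo) : (a * b).val = min (a.val + b.val) 2 := rfl

instance : CommMonoid TruncTwo where
  mul_assoc a b c := TruncTwo.ext (by simp only [val_mul]; omega)
  one_mul a := TruncTwo.ext (by simp only [val_mul, val_one]; have := a.le_two; omega)
  mul_one a := TruncTwo.ext (by simp only [val_mul, val_one]; have := a.le_two; omega)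
  mul_comm a b := TruncTwo.ext (by simp only [val_mul]; omega)

theorem mul_self_eq_mul_self_mul (a : TruncTwo) : a * a = a * a * a :=
  TruncTwo.ext (by simp only [val_mul]; omega)

def gen : TruncTwo := ⟨1, one_le_two⟩

theorem val_gen_pow (n : ℕ) : (gen ^ n).val = min n 2 := by
  induction n with
  | zero => rfl
  | succ n ih => rw [pow_succ, val_mul, ih]; simp only [gen]; omega

end TruncTwo

section Counts

variable {V : Type*} [DecidableEq V]

theorem min_count_two_eq_iff {u v : List V} :
    (∀ x, min (u.count x) 2 = min (v.count x) 2) ↔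
      ({x | x ∈ u} : Set V) = {x | x ∈ v} ∧
        ∀ x ∈ u, (u.count x = 1 ∧ v.count x = 1) ∨ (2 ≤ u.count x ∧ 2 ≤ v.count x) := by
  constructor
  · intro h
    refine ⟨Set.ext fun x => ?_, fun x hx => ?_⟩
    · simp only [Set.mem_ofPred_eq, ← List.count_pos_iff]
      have := h x
      omega
    · have := h x
      have := List.count_pos_iff.2 hx
      omega
  · rintro ⟨hc, hm⟩ x
    by_cases hx : x ∈ u
    · rcases hm x hx with h | h <;> omega
    · have hx' : x ∉ v := fun hv => hx (hc ▸ hv : x ∈ {x | x ∈ u})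
      rw [List.count_eq_zero_of_not_mem hx, List.count_eq_zero_of_not_mem hx']

theorem prod_map_eq_of_min_count_eq {M : Type*} [CommMonoid M]
    (hM : ∀ a : M, a * a = a * a * a) {u v : List V}
    (h : ∀ x, min (u.count x) 2 = min (v.count x) 2) (f : V → M) :
    (u.map f).prod = (v.map f).prod := by
  have hsupp : u.toFinset = v.toFinset := by
    ext x
    simp only [List.mem_toFinset, ← List.count_pos_iff]
    have := h x
    omega
  rw [Finset.prod_list_map_count, Finset.prod_list_map_count, hsupp]
  refine Finset.prod_congr rfl fun x _ => ?_
  rw [pow_eq_pow_min_two hM, h, ← pow_eq_pow_min_two hM]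

theorem min_count_two_eq_of_evalWord_eq {u v : List V}
    (h : ∀ f : V → ULift TruncTwo, evalWord f u = evalWord f v) (y : V) :
    min (u.count y) 2 = min (v.count y) 2 := by
  have hy := congrArg (WithOne.lift (MulHom.id _)) (h fun x => if x = y then ⟨TruncTwo.gen⟩ else 1)
  rw [lift_evalWord, lift_evalWord, List.prod_map_eq_pow_single y _ fun _ hx _ => if_neg hx,
    List.prod_map_eq_pow_single y _ fun _ hx _ => if_neg hx, if_pos rfl] at hy
  simpa only [ULift.pow_down, TruncTwo.val_gen_pow] using congrArg (fun a => a.down.val) hy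

end Counts

theorem statement1_general {V : Type*} [DecidableEq V] (u v : List V) :
    (∀ (S : Type*) [Semigroup S],
        (∀ a b : S, a * b = b * a) → (∀ a : S, a * a = (a * a) * a) →
        ∀ f : V → S, evalWord f u = evalWord f v) ↔
      (({x | x ∈ u} : Set V) = {x | x ∈ v} ∧
        ∀ x ∈ u, (u.count x = 1 ∧ v.count x = 1) ∨ (2 ≤ u.count x ∧ 2 ≤ v.count x)) := by
  rw [← min_count_two_eq_iff]
  constructor
  · intro h
    exact min_count_two_eq_of_evalWord_eq (h _ mul_comm
      fun a => congrArg ULift.up (TruncTwo.mul_self_eq_mul_self_mul a.down))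
  · intro h S _ hcomm hS f
    let _ : CommSemigroup S := { ‹Semigroup S› with mul_comm := hcomm }
    rw [evalWord_eq_prod_coe, evalWord_eq_prod_coe]
    exact prod_map_eq_of_min_count_eq (WithOne.mul_self_eq_mul_self_mul hS) h _

/-- The identity `u = v` holds in every commutative semigroup satisfying `x² = x³`
(the variety `C₂`) iff `c(u) = c(v)` and every letter of `c(u)` is either simple in
both `u` and `v`, or multiple in both `u` and `v`. -/
theorem statement1 {V : Type*} [DecidableEq V] (u v : List V) (hu : u ≠ []) (hv : v ≠ []) :
    (∀ (S : Type*) [Semigroup S],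
        (∀ a b : S, a * b = b * a) → (∀ a : S, a * a = (a * a) * a) →
        ∀ f : V → S, evalWord f u = evalWord f v) ↔
      (({x | x ∈ u} : Set V) = {x | x ∈ v} ∧
        ∀ x ∈ u, (u.count x = 1 ∧ v.count x = 1) ∨ (2 ≤ u.count x ∧ 2 ≤ v.count x)) :=
  statement1_general u v
end

section
/- Let u and v be words over a set V of variables. The identity u = v holds in every semigroup satisfying the identities xy = x²y and x²y² = y²x² (i.e., in the variety P = var{xy = x²y, x²y² = y²x²}) if and only if c(u) = c(v) and either the last letters t(u) and t(v) are multiple in u and in v respectively, or t(u) = t(v) and this letter is simple both in u and in v. -/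
def wordAct {V S : Type*} [Mul S] (f : V → S) (p : List V) (s : S) : S :=
  p.foldr (fun x t => f x * t) s

section WordAct

variable {V S : Type*}

theorem evalWord_append_singleton [Mul S] (f : V → S) (p : List V) (a : V) :
    evalWord f (p ++ [a]) = some (wordAct f p (f a)) := by
  induction p with
  | nil => rfl
  | cons x p ih =>
    simp only [List.cons_append, evalWord, List.foldr_cons] at ih ⊢
    rw [ih]
    rfl

variable [Semigroup S] (f : V → S)

theorem mul_wordAct (hlc : ∀ a b c : S, a * (b * c) = b * (a * c)) (a s : S) (p : List V) :
    a * wordAct f p s = wordAct f p (a * s) := by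
  induction p with
  | nil => rfl
  | cons x p ih => simp only [wordAct, List.foldr_cons] at ih ⊢; rw [hlc, ih]

theorem mul_wordAct_of_mem (hlc : ∀ a b c : S, a * (b * c) = b * (a * c))
    (hidem : ∀ a c : S, a * (a * c) = a * c) {x : V} {p : List V} (hx : x ∈ p) (s : S) :
    f x * wordAct f p s = wordAct f p s := by
  induction p with
  | nil => cases hx
  | cons y p ih =>
    simp only [wordAct, List.foldr_cons] at ih ⊢
    rcases List.mem_cons.mp hx with rfl | hx
    · exact hidem _ _
    · rw [hlc, ih hx]

theorem wordAct_perm (hlc : ∀ a b c : S, a * (b * c) = b * (a * c)) {p q : List V}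
    (h : p.Perm q) (s : S) : wordAct f p s = wordAct f q s :=
  haveI : LeftCommutative (fun x t => f x * t) := ⟨fun _ _ _ => hlc _ _ _⟩
  h.foldr_eq s

theorem wordAct_dedup (hlc : ∀ a b c : S, a * (b * c) = b * (a * c))
    (hidem : ∀ a c : S, a * (a * c) = a * c) [DecidableEq V] (p : List V) (s : S) :
    wordAct f p.dedup s = wordAct f p s := by
  induction p with
  | nil => rfl
  | cons x p ih =>
    by_cases hx : x ∈ p
    · rw [List.dedup_cons_of_mem hx, ih]
      exact (mul_wordAct_of_mem f hlc hidem hx s).symm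
    · rw [List.dedup_cons_of_notMem hx]
      simp only [wordAct, List.foldr_cons] at ih ⊢
      rw [ih]

theorem wordAct_congr (hlc : ∀ a b c : S, a * (b * c) = b * (a * c))
    (hidem : ∀ a c : S, a * (a * c) = a * c) {p q : List V} (h : ∀ x, x ∈ p ↔ x ∈ q)
    (s : S) : wordAct f p s = wordAct f q s := by
  classical
  rw [← wordAct_dedup f hlc hidem p, ← wordAct_dedup f hlc hidem q]
  refine wordAct_perm f hlc ?_ s
  exact (List.perm_ext_iff_of_nodup (List.nodup_dedup p) (List.nodup_dedup q)).2
    (by simpa only [List.mem_dedup] using h)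

end WordAct

section VarietyP

variable {V S : Type*} [Semigroup S]

theorem mul_mul_self_of_sq_mul (hsq : ∀ a b : S, a * b = a * a * b) (a c : S) :
    a * (a * c) = a * c := by
  rw [← mul_assoc, ← hsq]

theorem mul_left_comm_of_sq_mul (hsq : ∀ a b : S, a * b = a * a * b)
    (hcomm : ∀ a b : S, a * a * (b * b) = b * b * (a * a)) (a b c : S) :
    a * (b * c) = b * (a * c) :=
  calc a * (b * c) = a * a * (b * b * c) := by rw [hsq a, hsq b]
    _ = b * b * (a * a * c) := by simp only [← mul_assoc, hcomm a b]
    _ = b * (a * c) := by rw [← hsq a, ← hsq b]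

theorem mul_mul_self_comm_of_sq_mul (hsq : ∀ a b : S, a * b = a * a * b)
    (hcomm : ∀ a b : S, a * a * (b * b) = b * b * (a * a)) (a b : S) :
    b * (a * a) = a * (b * b) := by
  rw [hsq b, ← hcomm, ← hsq]

variable (f : V → S)

theorem wordAct_eq_of_mem (hsq : ∀ a b : S, a * b = a * a * b)
    (hcomm : ∀ a b : S, a * a * (b * b) = b * b * (a * a)) {p : List V} {x y : V}
    (hx : x ∈ p) (hy : y ∈ p) : wordAct f p (f x) = wordAct f p (f y) := by
  have hlc := mul_left_comm_of_sq_mul hsq hcomm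
  have hidem := mul_mul_self_of_sq_mul hsq
  have absorb : ∀ {z}, z ∈ p → ∀ s, wordAct f p (f z * s) = wordAct f p s := fun hz s => by
    rw [← mul_wordAct f hlc, mul_wordAct_of_mem f hlc hidem hz]
  calc wordAct f p (f x) = wordAct f p (f y * (f x * f x)) := by rw [absorb hy, absorb hx]
    _ = wordAct f p (f x * (f y * f y)) := by rw [mul_mul_self_comm_of_sq_mul hsq hcomm]
    _ = wordAct f p (f y) := by rw [absorb hx, absorb hy]

theorem wordAct_eq_wordAct_of_content (hsq : ∀ a b : S, a * b = a * a * b)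
    (hcomm : ∀ a b : S, a * a * (b * b) = b * b * (a * a)) {p q : List V} {a b : V}
    (hc : ∀ x, x ∈ p ∨ x = a ↔ x ∈ q ∨ x = b)
    (ht : (a ∈ p ∧ b ∈ q) ∨ (a = b ∧ a ∉ p ∧ b ∉ q)) :
    wordAct f p (f a) = wordAct f q (f b) := by
  have hlc := mul_left_comm_of_sq_mul hsq hcomm
  have hidem := mul_mul_self_of_sq_mul hsq
  rcases ht with ⟨ha, hb⟩ | ⟨rfl, ha, hb⟩
  · have hpq : ∀ x, x ∈ p ↔ x ∈ q := fun x => by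
      constructor <;> intro hx
      · rcases (hc x).1 (Or.inl hx) with hx | rfl <;> assumption
      · rcases (hc x).2 (Or.inl hx) with hx | rfl <;> assumption
    rw [wordAct_congr f hlc hidem hpq, wordAct_eq_of_mem f hsq hcomm ((hpq a).1 ha) hb]
  · refine wordAct_congr f hlc hidem (fun x => ?_) _
    constructor <;> intro hx
    · exact ((hc x).1 (Or.inl hx)).resolve_right (by rintro rfl; exact ha hx)
    · exact ((hc x).2 (Or.inl hx)).resolve_right (by rintro rfl; exact hb hx)

end VarietyP

universe u

-- Universe-polymorphic, so that it instantiates the `S : Type*` quantified in the theorem.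
inductive FirstOccurrence : Type u
  | absent
  | last
  | early

namespace FirstOccurrence

instance : Mul FirstOccurrence where
  mul
    | absent, q => q
    | _, _ => early

instance : Semigroup FirstOccurrence where
  mul_assoc p q r := by cases p <;> cases q <;> cases r <;> rfl

theorem mul_eq_mul_self_mul (p q : FirstOccurrence) : p * q = p * p * q := by
  cases p <;> cases q <;> rfl

theorem mul_self_comm (p q : FirstOccurrence) : p * p * (q * q) = q * q * (p * p) := by
  cases p <;> cases q <;> rfl

def marker {V : Type*} [DecidableEq V] (x y : V) : FirstOccurrence :=
  if y = x then last else absent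

theorem wordAct_marker {V : Type*} [DecidableEq V] (x : V) (p : List V) (s : FirstOccurrence) :
    wordAct (marker x) p s = if x ∈ p then early else s := by
  induction p with
  | nil => simp [wordAct]
  | cons y p ih =>
    simp only [wordAct, List.foldr_cons] at ih ⊢
    rw [ih]
    by_cases hy : y = x
    · simp only [marker, hy, if_true, List.mem_cons, true_or]
      split_ifs <;> rfl
    · simp only [marker, hy, ↓reduceIte, mul_ite, List.mem_cons, Ne.symm hy, false_or]
      rfl

end FirstOccurrence

theorem content_and_last_of_wordAct_eq {V : Type*} [DecidableEq V] {p q : List V} {a b : V}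
    (h : ∀ f : V → FirstOccurrence, wordAct f p (f a) = wordAct f q (f b)) :
    (∀ x, x ∈ p ∨ x = a ↔ x ∈ q ∨ x = b) ∧ ((a ∈ p ∧ b ∈ q) ∨ (a = b ∧ a ∉ p ∧ b ∉ q)) := by
  have hx : ∀ x, (if x ∈ p then .early else FirstOccurrence.marker x a) =
      if x ∈ q then .early else FirstOccurrence.marker x b := fun x => by
    simpa only [FirstOccurrence.wordAct_marker] using h (FirstOccurrence.marker x)
  refine ⟨fun x => by grind [FirstOccurrence.marker], ?_⟩
  by_cases ha : a ∈ p
  · have := hx b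
    grind [FirstOccurrence.marker]
  · have := hx a
    grind [FirstOccurrence.marker]

/-- The identity `u = v` holds in every semigroup satisfying `xy = x²y` and
`x²y² = y²x²` (the variety `P`) iff `c(u) = c(v)` and either the last letters `t(u)`
and `t(v)` are multiple in `u` and in `v` respectively, or `t(u) = t(v)` and this
letter is simple both in `u` and in `v`. -/
theorem statement2 {V : Type*} [DecidableEq V] (u v : List V) (hu : u ≠ []) (hv : v ≠ []) :
    (∀ (S : Type*) [Semigroup S],
        (∀ a b : S, a * b = (a * a) * b) →
        (∀ a b : S, (a * a) * (b * b) = (b * b) * (a * a)) →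
        ∀ f : V → S, evalWord f u = evalWord f v) ↔
      (({x | x ∈ u} : Set V) = {x | x ∈ v} ∧
        ((2 ≤ u.count (u.getLast hu) ∧ 2 ≤ v.count (v.getLast hv)) ∨
          (u.getLast hu = v.getLast hv ∧
            u.count (u.getLast hu) = 1 ∧ v.count (v.getLast hv) = 1))) := by
  obtain ⟨p, a, rfl⟩ : ∃ p a, u = p ++ [a] := ⟨_, _, (List.dropLast_append_getLast hu).symm⟩
  obtain ⟨q, b, rfl⟩ : ∃ q b, v = q ++ [b] := ⟨_, _, (List.dropLast_append_getLast hv).symm⟩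
  simp only [evalWord_append_singleton, Option.some_inj, List.getLast_append_singleton,
    Set.ext_iff, Set.mem_ofPred_eq, List.mem_append, List.mem_singleton, List.count_append,
    List.count_singleton_self, Nat.reduceLeDiff, List.one_le_count_iff, Nat.add_eq_right,
    List.count_eq_zero]
  exact ⟨fun h => content_and_last_of_wordAct_eq
      (h _ FirstOccurrence.mul_eq_mul_self_mul FirstOccurrence.mul_self_comm),
    fun ⟨hc, ht⟩ _ _ hsq hcomm f => wordAct_eq_wordAct_of_content f hsq hcomm hc ht⟩
end

section
/- Let S be a nil semigroup, let u be a word over a set V of variables, and let p and q be (possibly empty) finite lists of elements of V, not both empty. If S satisfies the identity u = p·u·q (where p·u·q denotes the concatenation of p, u and q), then S satisfies the identity u = 0. -/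
/-- `ppow a n` is the `n`-th power of `a` for `n ≥ 1` (with the junk value `a` at `n = 0`). -/
def ppow {S : Type*} [Mul S] (a : S) : ℕ → S
  | 0 => a
  | 1 => a
  | n + 2 => ppow a (n + 1) * a

/-- Multiplication on `Option S` with `none` as identity. -/
def omul {S : Type*} [Mul S] : Option S → Option S → Option S
  | none, b => b
  | some x, none => some x
  | some x, some y => some (x * y)

lemma omul_assoc {S : Type*} [Semigroup S] (a b c : Option S) :
    omul (omul a b) c = omul a (omul b c) := by
  cases a <;> cases b <;> cases c <;> simp [omul, mul_assoc]

lemma evalWord_cons {V S : Type*} [Mul S] (f : V → S) (x : V) (w : List V) :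
    evalWord f (x :: w) = omul (some (f x)) (evalWord f w) := by
  have h0 : evalWord f (x :: w)
      = some ((evalWord f w).elim (f x) (fun s => f x * s)) := rfl
  cases hw : evalWord f w <;> rw [h0, hw] <;> rfl

lemma evalWord_append {V S : Type*} [Semigroup S] (f : V → S) (w₁ w₂ : List V) :
    evalWord f (w₁ ++ w₂) = omul (evalWord f w₁) (evalWord f w₂) := by
  induction w₁ with
  | nil => rw [List.nil_append]; cases evalWord f w₂ <;> rfl
  | cons x t ih =>
      rw [List.cons_append, evalWord_cons, ih, evalWord_cons, omul_assoc]

lemma ppow_comm {S : Type*} [Semigroup S] (a : S) :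
    ∀ n, a * ppow a n = ppow a n * a
  | 0 => rfl
  | 1 => rfl
  | n + 2 => by
      have := ppow_comm a (n + 1)
      show a * (ppow a (n+1) * a) = ppow a (n+1) * a * a
      rw [← mul_assoc, this]

lemma ppow_succ' {S : Type*} [Semigroup S] (a : S) (n : ℕ) :
    ppow a (n + 2) = a * ppow a (n + 1) := by
  show ppow a (n + 1) * a = a * ppow a (n + 1)
  rw [ppow_comm]

/-- `op o n = o^(n+1)` with left-multiplication. -/
def op {S : Type*} [Mul S] (o : Option S) : ℕ → Option S
  | 0 => o
  | n + 1 => omul o (op o n)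

/-- `oq o n = o^(n+1)` with right-multiplication. -/
def oq {S : Type*} [Mul S] (o : Option S) : ℕ → Option S
  | 0 => o
  | n + 1 => omul (oq o n) o

lemma op_some {S : Type*} [Semigroup S] (x : S) :
    ∀ n, op (some x) n = some (ppow x (n + 1))
  | 0 => rfl
  | n + 1 => by
      show omul (some x) (op (some x) n) = some (ppow x (n + 2))
      rw [op_some x n]
      show some (x * ppow x (n+1)) = some (ppow x (n+2))
      rw [ppow_succ']

lemma oq_some {S : Type*} [Semigroup S] (y : S) :
    ∀ n, oq (some y) n = some (ppow y (n + 1))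
  | 0 => rfl
  | n + 1 => by
      show omul (oq (some y) n) (some y) = some (ppow y (n + 2))
      rw [oq_some y n]
      rfl

lemma omul_zero_left {S : Type*} [MulZeroClass S] (o : Option S) :
    omul (some (0 : S)) o = some 0 := by
  cases o <;> simp [omul]

lemma omul_zero_right {S : Type*} [MulZeroClass S] (o : Option S) :
    omul o (some (0 : S)) = some 0 := by
  cases o <;> simp [omul]

/-- In a nil semigroup, if an identity of the form `u = p·u·q` holds, where the lists
`p` and `q` are not both empty, then the identity `u = 0` holds. -/
theorem statement4 {V S : Type*} [SemigroupWithZero S]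
    (hnil : ∀ a : S, ∃ n : ℕ, 1 ≤ n ∧ ppow a n = 0)
    (u : List V) (hu : u ≠ []) (p q : List V) (hpq : p ≠ [] ∨ q ≠ [])
    (h : ∀ f : V → S, evalWord f u = evalWord f (p ++ u ++ q)) :
    ∀ f : V → S, evalWord f u = some 0 := by
  intro f
  have e : evalWord f u
      = omul (evalWord f p) (omul (evalWord f u) (evalWord f q)) := by
    conv_lhs => rw [h f]
    rw [evalWord_append, evalWord_append, omul_assoc]
  have key : ∀ n, evalWord f u
      = omul (op (evalWord f p) n) (omul (evalWord f u) (oq (evalWord f q) n)) := by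
    intro n
    induction n with
    | zero => exact e
    | succ n ih =>
        calc evalWord f u = omul (evalWord f p) (omul (evalWord f u) (evalWord f q)) := e
        _ = omul (evalWord f p)
              (omul (omul (op (evalWord f p) n)
                (omul (evalWord f u) (oq (evalWord f q) n))) (evalWord f q)) := by
            rw [← ih]
        _ = _ := by
            show _ = omul (omul (evalWord f p) (op (evalWord f p) n))
              (omul (evalWord f u) (omul (oq (evalWord f q) n) (evalWord f q)))
            rw [omul_assoc, omul_assoc, omul_assoc]
  have hsome : ∀ (w : List V), w ≠ [] → ∃ x : S, evalWord f w = some x := by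
    intro w hw
    cases w with
    | nil => exact absurd rfl hw
    | cons x t => exact ⟨_, rfl⟩
  rcases hpq with hp | hq
  · obtain ⟨x, hx⟩ := hsome p hp
    obtain ⟨n, hn1, hn0⟩ := hnil x
    obtain ⟨m, rfl⟩ : ∃ m, n = m + 1 := ⟨n - 1, (Nat.succ_pred_eq_of_pos hn1).symm⟩
    have hk := key m
    rw [hx, op_some, hn0, omul_zero_left] at hk
    exact hk
  · obtain ⟨y, hy⟩ := hsome q hq
    obtain ⟨n, hn1, hn0⟩ := hnil y
    obtain ⟨m, rfl⟩ : ∃ m, n = m + 1 := ⟨n - 1, (Nat.succ_pred_eq_of_pos hn1).symm⟩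
    have hk := key m
    rw [hy, oq_some, hn0, omul_zero_right, omul_zero_right] at hk
    exact hk
end

section
/- Let S be a semigroup with zero for which there exists a positive integer N such that a^N = 0 for every a ∈ S (a nil semigroup of bounded index). Let n ≥ 1, let x₁, x₂, …, xₙ be pairwise distinct variables, and let v be a word whose length is different from n. If S satisfies the identity x₁x₂⋯xₙ = v, then S satisfies the identity x₁x₂⋯xₙ = 0. -/
/-!
Products are computed in the monoid `WithOne S`, in which the elements of `S` form a
subsemigroup `A` and the empty product is `1`.

If a letter occurs on only one side of the identity, sending it to `0` kills `x₁⋯xₙ`. Otherwise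
`v` is a word in `x₁, …, xₙ` of length `> n`, so every product of `n` elements is also a product
of any larger number of elements. This leaves room, around any factor `d` of such a product, for
a substitution into `x₁⋯xₙ` that puts `d` into some slots, and rewriting by `v` creates a factor
`d d`: directly if `v` contains a square `xⱼxⱼ`; otherwise a letter `xⱼ` occurring twice first
turns `d` into `d γ d`, and then an adjacent pair `xₐx_b` of `v` with `b ≠ a + 1` (there is one,
as `v` is longer than any run `xₐxₐ₊₁⋯`) merges the two copies of `d`. Iterating yields a factor
`c ^ 2 ^ r` for every `r`, and `c ^ N = 0`.
-/

open Pointwise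

namespace Set

variable {M : Type*} [Monoid M] {B : Set M}

theorem list_prod_mem_pow {L : List M} (hL : ∀ x ∈ L, x ∈ B) : L.prod ∈ B ^ L.length := by
  induction L with
  | nil => simp
  | cons a L ih =>
    rw [List.prod_cons, List.length_cons, pow_succ']
    exact mul_mem_mul (hL a (by simp)) (ih fun x hx => hL x (by simp [hx]))

theorem exists_list_of_mem_pow {k : ℕ} {s : M} (hs : s ∈ B ^ k) :
    ∃ L : List M, L.length = k ∧ (∀ x ∈ L, x ∈ B) ∧ L.prod = s := by
  induction k generalizing s with
  | zero => exact ⟨[], rfl, by simp, by simpa using hs.symm⟩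
  | succ k ih =>
    rw [pow_succ'] at hs
    obtain ⟨a, ha, t, ht, rfl⟩ := hs
    obtain ⟨L, hLk, hLB, rfl⟩ := ih ht
    exact ⟨a :: L, by simp [hLk], by simpa [ha] using hLB, rfl⟩

end Set

namespace Subsemigroup

variable {M : Type*} [Monoid M] (A : Subsemigroup M)

def SatisfiesLinearIdentity {n : ℕ} (w : List (Fin n)) : Prop :=
  ∀ b : Fin n → M, (∀ i, b i ∈ A) → (List.ofFn b).prod = (w.map b).prod

theorem pow_subset {k : ℕ} (hk : 0 < k) : (A : Set M) ^ k ⊆ A := by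
  induction k, hk using Nat.le_induction with
  | base => simp
  | succ k _ ih =>
    rw [pow_succ]
    rintro _ ⟨x, hx, y, hy, rfl⟩
    exact A.mul_mem (ih hx) hy

theorem pow_subset_pow_of_le {p q : ℕ} (hq : 0 < q) (hqp : q ≤ p) :
    (A : Set M) ^ p ⊆ (A : Set M) ^ q := by
  obtain ⟨k, rfl⟩ := Nat.exists_eq_add_of_le hqp
  calc (A : Set M) ^ (q + k) = (A : Set M) ^ (q - 1) * (A : Set M) ^ (k + 1) := by
        rw [← pow_add]; congr 1; omega
    _ ⊆ (A : Set M) ^ (q - 1) * A := Set.mul_subset_mul_left (A.pow_subset k.succ_pos)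
    _ = (A : Set M) ^ q := by rw [← pow_succ, Nat.sub_add_cancel hq]

theorem mul_closure_mem_pow {n : ℕ} (hn : 0 < n) {x y : M} (hx : x ∈ (A : Set M) ^ n)
    (hy : y ∈ Submonoid.closure (A : Set M)) : x * y ∈ (A : Set M) ^ n := by
  induction hy using Submonoid.closure_induction generalizing x with
  | mem y hy =>
    exact A.pow_subset_pow_of_le hn n.le_succ (by rw [pow_succ]; exact Set.mul_mem_mul hx hy)
  | one => simpa
  | mul y z _ _ hy hz => rw [← mul_assoc]; exact hz (hy hx)

theorem closure_mul_mem_pow {n : ℕ} (hn : 0 < n) {x y : M} (hx : x ∈ (A : Set M) ^ n)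
    (hy : y ∈ Submonoid.closure (A : Set M)) : y * x ∈ (A : Set M) ^ n := by
  induction hy using Submonoid.closure_induction generalizing x with
  | mem y hy =>
    exact A.pow_subset_pow_of_le hn n.le_succ (by rw [pow_succ']; exact Set.mul_mem_mul hy hx)
  | one => simpa
  | mul y z _ _ hy hz => rw [mul_assoc]; exact hy (hz hx)

def sandwich (n : ℕ) (d : M) : Set M :=
  {s | ∃ α ∈ (A : Set M) ^ n, ∃ β ∈ (A : Set M) ^ n, s = α * d * β}

theorem mem_sandwich_of_mul {n : ℕ} (hn : 0 < n) {s d X Y : M}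
    (hX : X ∈ Submonoid.closure (A : Set M)) (hY : Y ∈ Submonoid.closure (A : Set M))
    (hs : s ∈ A.sandwich n (X * d * Y)) : s ∈ A.sandwich n d := by
  obtain ⟨α, hα, β, hβ, rfl⟩ := hs
  exact ⟨α * X, A.mul_closure_mem_pow hn hα hX, Y * β, A.closure_mul_mem_pow hn hβ hY,
    by simp only [mul_assoc]⟩

theorem list_prod_mem_pow_of_ne_nil {n : ℕ} (hn : 0 < n) {L : List M} (hL : L ≠ [])
    (hA : ∀ x ∈ L, x ∈ (A : Set M) ^ n) : L.prod ∈ (A : Set M) ^ n := by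
  obtain ⟨x, L, rfl⟩ := List.exists_cons_of_ne_nil hL
  rw [List.prod_cons]
  exact A.mul_closure_mem_pow hn (hA x (by simp)) (Submonoid.list_prod_mem _ fun y hy =>
    Submonoid.subset_closure (A.pow_subset hn (hA y (by simp [hy]))))

theorem list_prod_map_mem_closure {ι : Type*} {g : ι → M} (hg : ∀ i, g i ∈ A)
    (L : List ι) : (L.map g).prod ∈ Submonoid.closure (A : Set M) :=
  Submonoid.list_prod_mem _ (by simpa using fun i _ => Submonoid.subset_closure (hg i))

theorem mem_sandwich_sq_of_adjacent {n : ℕ} (hn : 0 < n) {ι : Type*} {g : ι → M}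
    (hg : ∀ i, g i ∈ A) {D E : List ι} {a b : ι} {X Y d : M} (ha : g a = X * d)
    (hb : g b = d * Y) (hX : X ∈ Submonoid.closure (A : Set M))
    (hY : Y ∈ Submonoid.closure (A : Set M)) {s : M}
    (hs : s ∈ A.sandwich n ((D ++ a :: b :: E).map g).prod) : s ∈ A.sandwich n (d * d) := by
  refine A.mem_sandwich_of_mul hn (mul_mem (A.list_prod_map_mem_closure hg D) hX)
    (mul_mem hY (A.list_prod_map_mem_closure hg E)) ?_
  simpa only [List.map_append, List.map_cons, List.prod_append, List.prod_cons, ha, hb,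
    mul_assoc] using hs

end Subsemigroup

namespace List

theorem exists_eq_append_cons_append_cons {α : Type*} [DecidableEq α] {w : List α}
    (h : ¬ w.Nodup) : ∃ j D B E, w = D ++ j :: (B ++ j :: E) ∧ j ∉ B := by
  induction w with
  | nil => simp at h
  | cons x t ih =>
    by_cases hx : x ∈ t
    · obtain ⟨B, E, hB, rfl, -⟩ := exists_erase_eq hx
      exact ⟨x, [], B, E, rfl, hB⟩
    · obtain ⟨j, D, B, E, rfl, hB⟩ := ih (by simpa [hx] using h)
      exact ⟨j, x :: D, B, E, rfl, hB⟩

theorem exists_adjacent_ne_succ {n : ℕ} {w : List (Fin n)} (h : n < w.length) :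
    ∃ (D : List (Fin n)) (a b : Fin n) (E : List (Fin n)),
      w = D ++ a :: b :: E ∧ (b : ℕ) ≠ a + 1 := by
  by_contra! hsucc
  have hchain : w.IsChain (· < ·) := isChain_iff_forall_rel_of_append_cons_cons.mpr
    fun a b _ _ he => Fin.lt_def.mpr (by have := hsucc _ _ _ _ he; omega)
  have := (isChain_iff_pairwise.mp hchain).nodup.length_le_card
  simp only [Fintype.card_fin] at this
  omega

theorem pos_of_lt_length {n : ℕ} {w : List (Fin n)} (h : n < w.length) : 0 < n :=
  (w[0]'(by omega)).pos

end List

namespace Subsemigroup.SatisfiesLinearIdentity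

variable {M : Type*} [Monoid M] {A : Subsemigroup M} {n : ℕ} {w : List (Fin n)}

theorem list_prod_eq (hw : A.SatisfiesLinearIdentity w) {L : List M} (hL : L.length = n)
    (hA : ∀ x ∈ L, x ∈ A) : L.prod = (w.map fun i : Fin n => L.getD i 1).prod := by
  have hof : List.ofFn (fun i : Fin n => L.getD i 1) = L :=
    List.ext_getElem (by simp [hL]) fun k _ _ => by simp [*]
  conv_lhs => rw [← hof]
  refine hw _ fun i => ?_
  rw [List.getD_eq_getElem _ _ (by omega)]
  exact hA _ (List.getElem_mem _)

theorem pow_subset_pow_length (hw : A.SatisfiesLinearIdentity w) :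
    (A : Set M) ^ n ⊆ (A : Set M) ^ w.length := by
  intro s hs
  obtain ⟨b, rfl⟩ := Set.mem_pow.mp hs
  rw [hw _ fun i => (b i).2, ← List.length_map (f := fun i => (b i : M))]
  exact Set.list_prod_mem_pow (by simp)

theorem pow_subset_pow (hw : A.SatisfiesLinearIdentity w) (hlen : n < w.length) {L : ℕ}
    (hL : n ≤ L) : (A : Set M) ^ n ⊆ (A : Set M) ^ L := by
  have hstep : (A : Set M) ^ n ⊆ (A : Set M) ^ (n + 1) :=
    hw.pow_subset_pow_length.trans (A.pow_subset_pow_of_le n.succ_pos hlen)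
  obtain ⟨k, rfl⟩ := Nat.exists_eq_add_of_le hL
  induction k with
  | zero => exact le_rfl
  | succ k ih =>
    calc (A : Set M) ^ n ⊆ (A : Set M) ^ (n + 1) := hstep
      _ = (A : Set M) ^ n * A := pow_succ _ _
      _ ⊆ (A : Set M) ^ (n + k) * A := Set.mul_subset_mul_right (ih (by omega))
      _ = (A : Set M) ^ (n + (k + 1)) := by rw [← pow_succ, add_assoc]

theorem pow_subset_pow_mul_pow_pow (hw : A.SatisfiesLinearIdentity w) (hlen : n < w.length)
    (m p : ℕ) : (A : Set M) ^ n ⊆ (A : Set M) ^ n * ((A : Set M) ^ m) ^ p := by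
  rw [← pow_mul, ← pow_add]
  exact hw.pow_subset_pow hlen (by omega)

theorem pow_subset_pow_pow_mul_pow (hw : A.SatisfiesLinearIdentity w) (hlen : n < w.length)
    (m q : ℕ) : (A : Set M) ^ n ⊆ ((A : Set M) ^ m) ^ q * (A : Set M) ^ n := by
  rw [← pow_mul, ← pow_add]
  exact hw.pow_subset_pow hlen (by omega)

/-- The flanks of the sandwich supply the `p` elements before `R` and the `q` elements after it. -/
theorem exists_tiling (hw : A.SatisfiesLinearIdentity w) (hlen : n < w.length) {m : ℕ}
    (hm : 0 < m) {R : List M} (hR : ∀ r ∈ R, r ∈ A) {p q : ℕ} (hpq : p + R.length + q = n)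
    {s : M} (hs : s ∈ A.sandwich n R.prod) :
    ∃ g : Fin n → M, (∀ i, g i ∈ A) ∧
      (∀ i : Fin n, (i : ℕ) < p ∨ p + R.length ≤ i → g i ∈ (A : Set M) ^ m) ∧
      (∀ (i : Fin n) (k : ℕ) (hk : k < R.length), (i : ℕ) = p + k → g i = R[k]) ∧
      s ∈ A.sandwich n (w.map g).prod := by
  obtain ⟨α, hα, β, hβ, rfl⟩ := hs
  obtain ⟨α', hα', _, hP, rfl⟩ := hw.pow_subset_pow_mul_pow_pow hlen m p hα
  obtain ⟨P, hPp, hPA, rfl⟩ := Set.exists_list_of_mem_pow hP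
  obtain ⟨_, hQ, β', hβ', rfl⟩ := hw.pow_subset_pow_pow_mul_pow hlen m q hβ
  obtain ⟨Q, hQq, hQA, rfl⟩ := Set.exists_list_of_mem_pow hQ
  set L := P ++ R ++ Q
  have hL : L.length = n := by simp [L, hPp, hQq, ← hpq]; omega
  have hLA : ∀ x ∈ L, x ∈ A := by
    simp only [L, List.mem_append]
    rintro x ((hx | hx) | hx)
    exacts [A.pow_subset hm (hPA x hx), hR x hx, A.pow_subset hm (hQA x hx)]
  have hget : ∀ i : Fin n, L.getD i 1 = L[(i : ℕ)]'(by omega) := fun i =>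
    List.getD_eq_getElem _ _ _
  refine ⟨fun i => L.getD i 1, fun i => by
    simpa only [hget] using hLA _ (List.getElem_mem _), ?_, ?_,
    ⟨α', hα', β', hβ', ?_⟩⟩
  · rintro i (hi | hi) <;> dsimp only <;> rw [hget]
    · simp only [L, List.getElem_append_left (show (i : ℕ) < (P ++ R).length by simp; omega),
        List.getElem_append_left (show (i : ℕ) < P.length by omega)]
      exact hPA _ (List.getElem_mem _)
    · simp only [L, List.getElem_append_right (show (P ++ R).length ≤ i by simp; omega)]
      exact hQA _ (List.getElem_mem _)
  · intro i k hk hik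
    dsimp only
    rw [hget]
    simp only [L, List.getElem_append_left (show (i : ℕ) < (P ++ R).length by simp; omega),
      List.getElem_append_right (show P.length ≤ i by omega)]
    congr 1
    omega
  · rw [← hw.list_prod_eq hL hLA]
    simp only [L, List.prod_append, mul_assoc]

theorem exists_mem_sandwich_mul_mul (hw : A.SatisfiesLinearIdentity w) (hlen : n < w.length)
    {j : Fin n} {D B E : List (Fin n)} (hdec : w = D ++ j :: (B ++ j :: E)) (hB : B ≠ [])
    (hjB : j ∉ B) {d s : M} (hd : d ∈ A) (hs : s ∈ A.sandwich n d) :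
    ∃ γ ∈ (A : Set M) ^ n, s ∈ A.sandwich n (d * γ * d) := by
  have hn := List.pos_of_lt_length hlen
  obtain ⟨g, hgA, hgout, hgR, hs⟩ := hw.exists_tiling hlen hn (R := [d]) (p := j)
    (q := n - 1 - j) (by simpa using hd) (by simp; omega) (by simpa using hs)
  have hgj : g j = d := hgR j 0 (by simp) (by simp)
  have hgB : ∀ i ∈ B, g i ∈ (A : Set M) ^ n := fun i hi => hgout i <| by
    have : (i : ℕ) ≠ j := Fin.val_ne_of_ne fun h => hjB (h ▸ hi)
    simp only [List.length_singleton]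
    omega
  refine ⟨(B.map g).prod,
    A.list_prod_mem_pow_of_ne_nil hn (by simpa using hB) (by simpa using hgB),
    A.mem_sandwich_of_mul hn (A.list_prod_map_mem_closure hgA D)
      (A.list_prod_map_mem_closure hgA E) ?_⟩
  simpa [hdec, hgj, mul_assoc] using hs

theorem exists_tiling_of_mem_sandwich_mul_mul (hw : A.SatisfiesLinearIdentity w)
    (hlen : n < w.length) {lo hi : Fin n} (hlt : lo < hi) {G : List M} (hG : ∀ x ∈ G, x ∈ A)
    (hGl : G.length = hi - lo - 1) {u d s : M} (hu : u ∈ Submonoid.closure (A : Set M))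
    (hd : d ∈ A) (hs : s ∈ A.sandwich n (d * (G.prod * u) * d)) :
    ∃ g : Fin n → M, (∀ i, g i ∈ A) ∧ g lo = d ∧ g hi = u * d ∧
      s ∈ A.sandwich n (w.map g).prod := by
  have hud : u * d ∈ A := by simpa using A.closure_mul_mem_pow one_pos (by simpa using hd) hu
  obtain ⟨g, hgA, -, hgR, hs'⟩ := hw.exists_tiling hlen one_pos (R := d :: G ++ [u * d])
    (p := lo) (q := n - 1 - hi) (by simp_all [or_imp]) (by simp; omega)
    (by simpa [mul_assoc] using hs)
  refine ⟨g, hgA, hgR lo 0 (by simp) (by simp), ?_, hs'⟩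
  simpa using hgR hi (G.length + 1) (by simp) (by omega)

theorem mem_sandwich_sq_of_mem_sandwich_mul_mul (hw : A.SatisfiesLinearIdentity w)
    (hlen : n < w.length) {D E : List (Fin n)} {a b : Fin n} (hdec : w = D ++ a :: b :: E)
    (hab : a ≠ b) (hsucc : (b : ℕ) ≠ a + 1) {d γ s : M} (hd : d ∈ A)
    (hγ : γ ∈ (A : Set M) ^ n) (hs : s ∈ A.sandwich n (d * γ * d)) :
    s ∈ A.sandwich n (d * d) := by
  have hn := List.pos_of_lt_length hlen
  rcases Fin.lt_or_lt_of_ne hab with h | h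
  -- slots `a, …, b` receive `d`, the factors of `γ`, and `d`
  · obtain ⟨G, hGl, hGA, rfl⟩ := Set.exists_list_of_mem_pow
      (A.pow_subset_pow_of_le (q := b - a - 1) (by omega) (by omega) hγ)
    obtain ⟨g, hgA, hga, hgb, hs'⟩ := hw.exists_tiling_of_mem_sandwich_mul_mul hlen h hGA
      (by omega) (one_mem _) hd (by simpa using hs)
    exact A.mem_sandwich_sq_of_adjacent hn hgA (X := 1) (Y := 1) (by simpa) (by simpa using hgb)
      (one_mem _) (one_mem _) (hdec ▸ hs')
  -- slots `b, …, a` receive `d`, the factors `G` of `γ = G.prod * u`, and `u * d`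
  · have : γ ∈ (A : Set M) ^ ((a : ℕ) - b - 1) * A := by
      rw [← pow_succ]
      exact A.pow_subset_pow_of_le (by omega) (by omega) hγ
    obtain ⟨_, hG, u, hu, rfl⟩ := this
    obtain ⟨G, hGl, hGA, rfl⟩ := Set.exists_list_of_mem_pow hG
    obtain ⟨g, hgA, hgb, hga, hs'⟩ := hw.exists_tiling_of_mem_sandwich_mul_mul hlen h hGA
      (by omega) (Submonoid.subset_closure hu) hd hs
    exact A.mem_sandwich_sq_of_adjacent hn hgA (X := u) (Y := 1) hga (by simpa using hgb)
      (Submonoid.subset_closure hu) (one_mem _) (hdec ▸ hs')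

theorem mem_sandwich_sq (hw : A.SatisfiesLinearIdentity w) (hlen : n < w.length) {d s : M}
    (hd : d ∈ A) (hs : s ∈ A.sandwich n d) : s ∈ A.sandwich n (d * d) := by
  have hn := List.pos_of_lt_length hlen
  by_cases hsq : ∃ (D : List (Fin n)) (a : Fin n) (E : List (Fin n)), w = D ++ a :: a :: E
  · obtain ⟨D, a, E, hdec⟩ := hsq
    obtain ⟨g, hgA, -, hgR, hs'⟩ := hw.exists_tiling hlen one_pos (R := [d]) (p := a)
      (q := n - 1 - a) (by simpa using hd) (by simp; omega) (by simpa using hs)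
    have hga : g a = d := hgR a 0 (by simp) (by simp)
    exact A.mem_sandwich_sq_of_adjacent hn hgA (X := 1) (Y := 1) (by simpa) (by simpa)
      (one_mem _) (one_mem _) (hdec ▸ hs')
  · obtain ⟨j, D, B, E, hdec, hjB⟩ := List.exists_eq_append_cons_append_cons (w := w)
      fun hnd => (hnd.length_le_card.trans_lt (by simpa using hlen)).false
    have hB : B ≠ [] := by rintro rfl; exact hsq ⟨D, j, E, hdec⟩
    obtain ⟨γ, hγ, hs'⟩ := hw.exists_mem_sandwich_mul_mul hlen hdec hB hjB hd hs
    obtain ⟨D', a, b, E', hdec', hsucc⟩ := List.exists_adjacent_ne_succ hlen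
    have hab : a ≠ b := by rintro rfl; exact hsq ⟨D', a, E', hdec'⟩
    exact hw.mem_sandwich_sq_of_mem_sandwich_mul_mul hlen hdec' hab hsucc hd hγ hs'

theorem exists_mem_sandwich_pow (hw : A.SatisfiesLinearIdentity w) (hlen : n < w.length)
    {s : M} (hs : s ∈ (A : Set M) ^ n) (R : ℕ) : ∃ c ∈ A, s ∈ A.sandwich n (c ^ R) := by
  have hn := List.pos_of_lt_length hlen
  have hdouble : ∀ r, ∃ c ∈ A, s ∈ A.sandwich n (c ^ 2 ^ r) := by
    intro r
    induction r with
    | zero =>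
      have : s ∈ (A : Set M) ^ n * A * (A : Set M) ^ n := by
        rw [← pow_succ, ← pow_add]
        exact hw.pow_subset_pow hlen (by omega) hs
      obtain ⟨_, ⟨α, hα, c, hc, rfl⟩, β, hβ, rfl⟩ := this
      exact ⟨c, hc, α, hα, β, hβ, by simp⟩
    | succ r ih =>
      obtain ⟨c, hc, hs⟩ := ih
      have hpow : c ^ 2 ^ r ∈ A := A.pow_subset (Nat.two_pow_pos r) (Set.pow_mem_pow hc)
      refine ⟨c, hc, ?_⟩
      rw [pow_succ, pow_mul, sq]
      exact hw.mem_sandwich_sq hlen hpow hs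
  obtain ⟨c, hc, hs⟩ := hdouble R
  refine ⟨c, hc, A.mem_sandwich_of_mul hn (one_mem _)
    (pow_mem (Submonoid.subset_closure hc) (2 ^ R - R)) ?_⟩
  rwa [one_mul, ← pow_add, Nat.add_sub_cancel' Nat.lt_two_pow_self.le]

end Subsemigroup.SatisfiesLinearIdentity

theorem WithOne.mul_coe_zero_mul {S : Type*} [SemigroupWithZero S] (α β : WithOne S) :
    α * ((0 : S) : WithOne S) * β = ((0 : S) : WithOne S) := by
  induction α using WithOne.cases_on <;> induction β using WithOne.cases_on <;>
    simp [← WithOne.coe_mul]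

section Semigroup

variable {V S : Type*} [SemigroupWithZero S]

theorem evalWord_eq_prod (f : V → S) (w : List V) :
    evalWord f w = (w.map fun y => (f y : WithOne S)).prod := by
  induction w with
  | nil => rfl
  | cons y w ih =>
    rw [List.map_cons, List.prod_cons, ← ih]
    change some ((evalWord f w).elim (f y) fun s => f y * s) = _
    cases evalWord f w <;> rfl

theorem coe_ppow (a : S) {k : ℕ} (hk : 0 < k) :
    ((ppow a k : S) : WithOne S) = (a : WithOne S) ^ k := by
  induction k, hk using Nat.le_induction with
  | base => simp [ppow]
  | succ k hk ih =>
    obtain ⟨j, rfl⟩ := Nat.exists_eq_add_of_le' hk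
    rw [pow_succ, ← ih]
    rfl

theorem evalWord_congr {f g : V → S} {w : List V} (h : ∀ y ∈ w, f y = g y) :
    evalWord f w = evalWord g w := by
  simp only [evalWord_eq_prod]
  rw [List.map_congr_left fun y hy => congrArg _ (h y hy)]

theorem evalWord_eq_zero_of_mem {f : V → S} {w : List V} {y : V} (hy : y ∈ w) (hf : f y = 0) :
    evalWord f w = some 0 := by
  obtain ⟨s, t, rfl⟩ := List.append_of_mem hy
  rw [evalWord_eq_prod, List.map_append, List.map_cons, List.prod_append, List.prod_cons, hf,
    ← mul_assoc]
  exact WithOne.mul_coe_zero_mul _ _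

theorem evalWord_eq_zero_of_mem_of_not_mem [DecidableEq V] {u v : List V}
    (h : ∀ f : V → S, evalWord f u = evalWord f v) {y : V} (hv : y ∈ v) (hu : y ∉ u)
    (f : V → S) : evalWord f u = some 0 := calc
  evalWord f u = evalWord (Function.update f y 0) u :=
    evalWord_congr fun _ hz => (Function.update_of_ne (ne_of_mem_of_not_mem hz hu) _ _).symm
  _ = evalWord (Function.update f y 0) v := h _
  _ = some 0 := evalWord_eq_zero_of_mem hv (Function.update_self _ _ _)

theorem satisfiesLinearIdentity_of_evalWord {n : ℕ} {x : Fin n → V} (hx : x.Injective)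
    {w : List (Fin n)} (h : ∀ f : V → S, evalWord f (List.ofFn x) = evalWord f (w.map x)) :
    (WithOne.coeMulHom (α := S)).srange.SatisfiesLinearIdentity w := by
  intro b hb
  choose b' hb' using fun i => MulHom.mem_srange.mp (hb i)
  have := h (Function.extend x b' fun _ => 0)
  simp only [evalWord_eq_prod, List.map_ofFn, List.map_map] at this
  have hb : b = (fun y => ((Function.extend x b' fun _ => 0) y : WithOne S)) ∘ x :=
    funext fun i => by simp [hx.extend_apply, ← hb']
  rwa [hb]

theorem list_prod_ofFn_eq_zero {N : ℕ} (hN : 1 ≤ N) (hnil : ∀ a : S, ppow a N = 0) {n : ℕ}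
    {w : List (Fin n)} (hw : (WithOne.coeMulHom (α := S)).srange.SatisfiesLinearIdentity w)
    (hlen : n < w.length) (b : Fin n → S) :
    (List.ofFn fun i => (b i : WithOne S)).prod = ((0 : S) : WithOne S) := by
  obtain ⟨c, hc, α, -, β, -, he⟩ := hw.exists_mem_sandwich_pow hlen
    (Set.mem_pow.mpr ⟨fun i => ⟨b i, b i, rfl⟩, rfl⟩) N
  obtain ⟨c, rfl⟩ := MulHom.mem_srange.mp hc
  rw [he, WithOne.coeMulHom_apply, ← coe_ppow c hN, hnil, WithOne.mul_coe_zero_mul]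

end Semigroup

theorem statement5_general {V S : Type*} [SemigroupWithZero S]
    (N : ℕ) (hN : 1 ≤ N) (hnil : ∀ a : S, ppow a N = 0)
    (n : ℕ) (x : Fin n → V) (hx : Function.Injective x)
    (v : List V) (hlen : v.length ≠ n)
    (h : ∀ f : V → S, evalWord f (List.ofFn x) = evalWord f v) :
    ∀ f : V → S, evalWord f (List.ofFn x) = some 0 := by
  classical
  intro f
  by_cases hvx : ∀ y ∈ v, y ∈ Set.range x
  swap
  · push Not at hvx
    obtain ⟨y, hyv, hyx⟩ := hvx
    exact evalWord_eq_zero_of_mem_of_not_mem h hyv (by rwa [List.mem_ofFn]) f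
  by_cases hxv : ∀ i, x i ∈ v
  swap
  · push Not at hxv
    obtain ⟨i, hi⟩ := hxv
    rw [h f]
    exact evalWord_eq_zero_of_mem_of_not_mem (fun f => (h f).symm)
      (List.mem_ofFn.mpr ⟨i, rfl⟩) hi f
  obtain ⟨w, rfl⟩ : v ∈ Set.range (List.map x) := by rwa [Set.range_list_map]
  have hle : n ≤ w.length := by
    have := ((List.nodup_ofFn.mpr hx).subperm fun y hy => by
      obtain ⟨i, rfl⟩ := List.mem_ofFn.mp hy
      exact hxv i).length_le
    rwa [List.length_ofFn, List.length_map] at this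
  rw [evalWord_eq_prod, List.map_ofFn]
  exact list_prod_ofFn_eq_zero hN hnil (satisfiesLinearIdentity_of_evalWord hx h)
    (by simp at hlen; omega) (f ∘ x)

/-- Let `S` be a nil semigroup of bounded index (`a ^ N = 0` for all `a`, for a fixed
positive `N`). If `S` satisfies an identity `x₁x₂⋯xₙ = v` with `x₁, …, xₙ` pairwise
distinct variables and `v` a word of length different from `n`, then `S` satisfies
`x₁x₂⋯xₙ = 0`. -/
theorem statement5 {V S : Type*} [SemigroupWithZero S]
    (N : ℕ) (hN : 1 ≤ N) (hnil : ∀ a : S, ppow a N = 0)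
    (n : ℕ) (hn : 1 ≤ n) (x : Fin n → V) (hx : Function.Injective x)
    (v : List V) (hv : v ≠ []) (hlen : v.length ≠ n)
    (h : ∀ f : V → S, evalWord f (List.ofFn x) = evalWord f v) :
    ∀ f : V → S, evalWord f (List.ofFn x) = some 0 :=
  statement5_general N hN hnil n x hx v hlen h
end

section
/- Let S be a commutative nil semigroup satisfying the identity x²y = xy² (for all x, y ∈ S). Then S satisfies the identity x²yz = 0, i.e., x·x·y·z = 0 for all x, y, z ∈ S. -/
/-!
Commutativity and `x²y = xy²` give `x²(yw) = x(yw)² = y²(xw²) = y(xw²)² = x²(yw⁴)`, so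
`x²yz = x²y z^(4^k)` for every `k`, and the right-hand side vanishes once `4^k` exceeds the
nilpotency index of `z`.
-/

section ppow

variable {S : Type*}

lemma ppow_succ_of_one_le [Mul S] (a : S) {n : ℕ} (hn : 1 ≤ n) :
    ppow a (n + 1) = ppow a n * a := by
  obtain ⟨m, rfl⟩ := Nat.exists_eq_add_of_le' hn
  rfl

lemma ppow_add_of_one_le [Semigroup S] (a : S) {m n : ℕ} (hm : 1 ≤ m) (hn : 1 ≤ n) :
    ppow a (m + n) = ppow a m * ppow a n := by
  induction n, hn using Nat.le_induction with
  | base => exact ppow_succ_of_one_le a hm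
  | succ n hn ih =>
    rw [← add_assoc, ppow_succ_of_one_le a (by omega), ih, ppow_succ_of_one_le a hn, mul_assoc]

lemma ppow_eq_zero_of_le [SemigroupWithZero S] {a : S} {m n : ℕ} (hm : 1 ≤ m)
    (ha : ppow a m = 0) (hmn : m ≤ n) : ppow a n = 0 := by
  obtain ⟨k, rfl⟩ := Nat.exists_eq_add_of_le hmn
  rcases Nat.eq_zero_or_pos k with rfl | hk
  · exact ha
  · rw [ppow_add_of_one_le a hm hk, ha, zero_mul]

end ppow

section CommSemigroup

variable {S : Type*} [CommSemigroup S] (h : ∀ x y : S, x * x * y = x * (y * y))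
include h

lemma sq_mul_mul_eq_sq_mul_mul_sq_sq (x y w : S) :
    x * x * (y * w) = x * x * (y * (w * w * (w * w))) :=
  calc x * x * (y * w)
      = x * (y * w * (y * w)) := h x _
    _ = y * y * (x * (w * w)) := by ac_rfl
    _ = y * (x * (w * w) * (x * (w * w))) := h y _
    _ = x * x * (y * (w * w * (w * w))) := by ac_rfl

lemma sq_mul_mul_eq_sq_mul_mul_ppow_four_pow (x y z : S) (k : ℕ) :
    x * x * (y * z) = x * x * (y * ppow z (4 ^ k)) := by
  induction k with
  | zero => rfl
  | succ k ih =>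
    have hk : 1 ≤ 4 ^ k := Nat.one_le_pow _ _ (by norm_num)
    rw [ih, sq_mul_mul_eq_sq_mul_mul_sq_sq h, ← ppow_add_of_one_le z hk hk,
      ← ppow_add_of_one_le z (by omega) (by omega)]
    congr 3
    ring

end CommSemigroup

/-- A commutative nil semigroup satisfying the identity `x²y = xy²` satisfies the
identity `x²yz = 0`. -/
theorem statement8 {S : Type*} [SemigroupWithZero S]
    (hcomm : ∀ a b : S, a * b = b * a)
    (hnil : ∀ a : S, ∃ n : ℕ, 1 ≤ n ∧ ppow a n = 0)
    (h : ∀ x y : S, (x * x) * y = x * (y * y)) :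
    ∀ x y z : S, ((x * x) * y) * z = 0 := by
  let _ : CommSemigroup S := { ‹SemigroupWithZero S› with mul_comm := hcomm }
  intro x y z
  obtain ⟨n, hn, hz⟩ := hnil z
  have hz' : ppow z (4 ^ n) = 0 := ppow_eq_zero_of_le hn hz (Nat.lt_pow_self (by norm_num)).le
  rw [mul_assoc, sq_mul_mul_eq_sq_mul_mul_ppow_four_pow h x y z n, hz', mul_zero, mul_zero]
end

section
/- Let X be a set and let ρ be an equivalence relation on X which has exactly one non-singleton equivalence class (that is, exactly one equivalence class of ρ contains more than one element, and all other classes are singletons). Then ρ is a modular element of the lattice Eq(X) of all equivalence relations on X: for all equivalence relations σ, τ on X with σ ≤ τ, one has (ρ ∨ σ) ∧ τ = (ρ ∧ τ) ∨ σ. -/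
/-- An equivalence relation with exactly one non-singleton class is a modular element
of the lattice of all equivalence relations. -/
theorem statement9 {X : Type*} (ρ : Setoid X)
    (hρ : ∃! c : Set X, c ∈ ρ.classes ∧ ∃ x ∈ c, ∃ y ∈ c, x ≠ y) :
    ∀ σ τ : Setoid X, σ ≤ τ → (ρ ⊔ σ) ⊓ τ = (ρ ⊓ τ) ⊔ σ := by
  obtain ⟨c, ⟨hc, -⟩, huniq⟩ := hρ
  -- ρ relates x y → x = y ∨ (x ∈ c ∧ y ∈ c)
  have hrel : ∀ x y, ρ x y → x = y ∨ (x ∈ c ∧ y ∈ c) := by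
    intro x y hxy
    by_cases h : x = y
    · exact Or.inl h
    · right
      have : {z | ρ z y} = c := by
        apply huniq
        exact ⟨ρ.mem_classes y, x, hxy, y, ρ.refl' y, h⟩
      rw [← this]
      exact ⟨hxy, ρ.refl' y⟩
  -- elements of c are ρ-related
  have hcc : ∀ x ∈ c, ∀ y ∈ c, ρ x y := by
    obtain ⟨w, rfl⟩ := hc
    intro x hx y hy
    exact ρ.trans' hx (ρ.symm' hy)
  intro σ τ hστ
  apply le_antisymm
  · intro x y hxy
    obtain ⟨hsup, hτ⟩ := hxy
    -- characterize ρ ⊔ σ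
    have key : ∀ x y, (ρ ⊔ σ) x y →
        σ x y ∨ ∃ a ∈ c, ∃ b ∈ c, σ x a ∧ σ b y := by
      rw [Setoid.sup_eq_eqvGen]
      intro x y h
      induction h with
      | rel u v h =>
        rcases h with h | h
        · rcases hrel u v h with rfl | ⟨hu, hv⟩
          · exact Or.inl (σ.refl' u)
          · exact Or.inr ⟨u, hu, v, hv, σ.refl' u, σ.refl' v⟩
        · exact Or.inl h
      | refl u => exact Or.inl (σ.refl' u)
      | symm u v _ ih =>
        rcases ih with h | ⟨a, ha, b, hb, h1, h2⟩
        · exact Or.inl (σ.symm' h)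
        · exact Or.inr ⟨b, hb, a, ha, σ.symm' h2, σ.symm' h1⟩
      | trans u v w _ _ ih1 ih2 =>
        rcases ih1 with h1 | ⟨a, ha, b, hb, h1, h2⟩
        · rcases ih2 with h2 | ⟨a, ha, b, hb, h3, h4⟩
          · exact Or.inl (σ.trans' h1 h2)
          · exact Or.inr ⟨a, ha, b, hb, σ.trans' h1 h3, h4⟩
        · rcases ih2 with h3 | ⟨a', ha', b', hb', h3, h4⟩
          · exact Or.inr ⟨a, ha, b, hb, h1, σ.trans' h2 h3⟩
          · exact Or.inr ⟨a, ha, b', hb', h1, h4⟩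
    rcases key x y hsup with h | ⟨a, ha, b, hb, h1, h2⟩
    · exact le_sup_right (a := ρ ⊓ τ) h
    · have hxa : ((ρ ⊓ τ) ⊔ σ) x a := le_sup_right (a := ρ ⊓ τ) h1
      have hby : ((ρ ⊓ τ) ⊔ σ) b y := le_sup_right (a := ρ ⊓ τ) h2
      have hab : ((ρ ⊓ τ) ⊔ σ) a b := by
        apply le_sup_left (a := ρ ⊓ τ) (b := σ)
        refine ⟨hcc a ha b hb, ?_⟩
        exact τ.trans' (τ.symm' (hστ h1)) (τ.trans' hτ (τ.symm' (hστ h2)))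
      exact Setoid.trans' _ (Setoid.trans' _ hxa hab) hby
  · exact sup_le (le_inf (le_trans inf_le_left le_sup_left) inf_le_right)
      (le_inf le_sup_right hστ)
end

section
/- Let X be a set and let ρ be an equivalence relation on X which has exactly one non-singleton equivalence class (that is, exactly one equivalence class of ρ contains more than one element, and all other classes are singletons). Then ρ is an upper-modular element of the lattice Eq(X) of all equivalence relations on X: for all equivalence relations σ, τ on X with σ ≤ ρ, one has (τ ∨ σ) ∧ ρ = (τ ∧ ρ) ∨ σ. -/
/-!
Let `C` be the non-singleton class of `ρ`, so that `ρ a b ↔ a = b ∨ a, b ∈ C`, and put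
`μ = (τ ⊓ ρ) ⊔ σ`; only `(τ ⊔ σ) ⊓ ρ ≤ μ` needs proof. Relate `a ~ b` if `τ a b`, or if `a` and `b`
are `τ`-related to points `a', b'` of `C` with `μ a' b'`. This is an equivalence relation, since two
`τ`-related points of `C` are `τ ⊓ ρ`-related; it contains `τ`, and `σ` because `σ` only joins points
of `C`. Hence it contains `τ ⊔ σ`, and on `C` it is contained in `μ`.
-/

namespace Setoid

variable {X : Type*}

def joinThrough (τ μ : Setoid X) (C : Set X) (hτμ : ∀ a ∈ C, ∀ b ∈ C, τ a b → μ a b) :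
    Setoid X where
  r a b := τ a b ∨ ∃ a' ∈ C, ∃ b' ∈ C, τ a a' ∧ μ a' b' ∧ τ b' b
  iseqv := by
    refine ⟨fun a => .inl (τ.refl a), ?_, ?_⟩
    · rintro a b (hab | ⟨a', ha', b', hb', haa', hab', hbb'⟩)
      · exact .inl (τ.symm hab)
      · exact .inr ⟨b', hb', a', ha', τ.symm hbb', μ.symm hab', τ.symm haa'⟩
    · rintro a b c (hab | ⟨a', ha', b', hb', haa', hab', hbb'⟩)
        (hbc | ⟨b'', hb'', c', hc', hbb'', hbc', hcc'⟩)
      · exact .inl (τ.trans hab hbc)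
      · exact .inr ⟨b'', hb'', c', hc', τ.trans hab hbb'', hbc', hcc'⟩
      · exact .inr ⟨a', ha', b', hb', haa', hab', τ.trans hbb' hbc⟩
      · have hb'b'' : μ b' b'' := hτμ b' hb' b'' hb'' (τ.trans hbb' hbb'')
        exact .inr ⟨a', ha', c', hc', haa', μ.trans (μ.trans hab' hb'b'') hbc', hcc'⟩

theorem sup_inf_eq_inf_sup_of_rel_iff {ρ σ τ : Setoid X} {C : Set X}
    (hρ : ∀ a b, ρ a b ↔ a = b ∨ a ∈ C ∧ b ∈ C) (hσ : σ ≤ ρ) :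
    (τ ⊔ σ) ⊓ ρ = (τ ⊓ ρ) ⊔ σ := by
  set μ := (τ ⊓ ρ) ⊔ σ
  have hτμ : ∀ a ∈ C, ∀ b ∈ C, τ a b → μ a b := fun a ha b hb hab =>
    le_sup_left (a := τ ⊓ ρ) (inf_iff_and.2 ⟨hab, (hρ a b).2 (.inr ⟨ha, hb⟩)⟩)
  have hσμ : σ ≤ μ := le_sup_right
  have hle : τ ⊔ σ ≤ joinThrough τ μ C hτμ := by
    refine sup_le (fun a b hab => .inl hab) fun a b hab => ?_
    rcases (hρ a b).1 (hσ hab) with rfl | ⟨ha, hb⟩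
    · exact .inl (τ.refl a)
    · exact .inr ⟨a, ha, b, hb, τ.refl a, hσμ hab, τ.refl b⟩
  refine le_antisymm (fun x y hxy => ?_)
    (sup_le (le_inf (inf_le_left.trans le_sup_left) inf_le_right) (le_inf le_sup_right hσ))
  obtain ⟨hxy, hρxy⟩ := inf_iff_and.1 hxy
  rcases (hρ x y).1 hρxy with rfl | ⟨hx, hy⟩
  · exact μ.refl x
  rcases hle hxy with hτxy | ⟨x', hx', y', hy', hxx', hx'y', hy'y⟩
  · exact hτμ x hx y hy hτxy
  · exact μ.trans (μ.trans (hτμ x hx x' hx' hxx') hx'y') (hτμ y' hy' y hy hy'y)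

theorem exists_rel_iff_of_existsUnique_nontrivial_class {ρ : Setoid X}
    (hρ : ∃! c : Set X, c ∈ ρ.classes ∧ ∃ x ∈ c, ∃ y ∈ c, x ≠ y) :
    ∃ C : Set X, ∀ a b, ρ a b ↔ a = b ∨ a ∈ C ∧ b ∈ C := by
  obtain ⟨C, ⟨⟨w, rfl⟩, -⟩, huniq⟩ := hρ
  refine ⟨{x | ρ x w}, fun a b => ⟨fun hab => ?_, ?_⟩⟩
  · by_cases hne : a = b
    · exact .inl hne
    have hclass : {x | ρ x a} = {x | ρ x w} :=
      huniq _ ⟨ρ.mem_classes a, a, ρ.refl a, b, ρ.symm hab, hne⟩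
    refine .inr ⟨?_, ?_⟩ <;> rw [← hclass]
    exacts [ρ.refl a, ρ.symm hab]
  · rintro (rfl | ⟨ha, hb⟩)
    exacts [ρ.refl a, ρ.trans ha (ρ.symm hb)]

end Setoid

/-- An equivalence relation with exactly one non-singleton class is an upper-modular
element of the lattice of all equivalence relations. -/
theorem statement10 {X : Type*} (ρ : Setoid X)
    (hρ : ∃! c : Set X, c ∈ ρ.classes ∧ ∃ x ∈ c, ∃ y ∈ c, x ≠ y) :
    ∀ σ τ : Setoid X, σ ≤ ρ → (τ ⊔ σ) ⊓ ρ = (τ ⊓ ρ) ⊔ σ := by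
  obtain ⟨C, hC⟩ := Setoid.exists_rel_iff_of_existsUnique_nontrivial_class hρ
  exact fun σ τ hσ => Setoid.sup_inf_eq_inf_sup_of_rel_iff hC hσ
end

section
/- Let L be a lattice and x ∈ L. If x is both a distributive element and a modular element of L, then x is a standard element of L. -/
/-- A distributive and modular element of a lattice is standard. -/
theorem statement11 {L : Type*} [Lattice L] (x : L)
    (hdistr : ∀ y z : L, x ⊔ (y ⊓ z) = (x ⊔ y) ⊓ (x ⊔ z))
    (hmod : ∀ y z : L, y ≤ z → (x ⊔ y) ⊓ z = (x ⊓ z) ⊔ y) :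
    ∀ y z : L, (x ⊔ y) ⊓ z = (x ⊓ z) ⊔ (y ⊓ z) := by
  intro y z
  have h1 := hmod (y ⊓ z) z inf_le_right
  have h2 : (x ⊔ (y ⊓ z)) ⊓ z = (x ⊔ y) ⊓ z := by
    rw [hdistr, inf_assoc, inf_eq_right.mpr (le_sup_right : z ≤ x ⊔ z)]
  rw [← h1, h2]
end

section
/- Let L be a lattice and x ∈ L. Then x is a neutral element of L if and only if x is simultaneously a distributive element, a codistributive element and a modular element of L. -/
/-- A neutral element is codistributive. -/
theorem statement12_aux {L : Type*} [Lattice L] (x : L)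
    (h : ∀ y z : L, (x ⊔ y) ⊓ (y ⊔ z) ⊓ (z ⊔ x) = (x ⊓ y) ⊔ (y ⊓ z) ⊔ (z ⊓ x)) :
    ∀ y z : L, x ⊓ (y ⊔ z) = (x ⊓ y) ⊔ (x ⊓ z) := by
  have key : ∀ y z : L, x ⊓ (y ⊔ x ⊓ z) = x ⊓ y ⊔ x ⊓ z := by
    intro y z
    have h1 := h y (x ⊓ z)
    have e1 : (x ⊔ y) ⊓ (y ⊔ x ⊓ z) ⊓ (x ⊓ z ⊔ x) = x ⊓ (y ⊔ x ⊓ z) := by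
      have hx : x ⊓ z ⊔ x = x := by simp
      rw [hx, inf_right_comm, inf_comm (x ⊔ y) x, inf_sup_self]
    have e2 : x ⊓ y ⊔ y ⊓ (x ⊓ z) ⊔ x ⊓ z ⊓ x = x ⊓ y ⊔ x ⊓ z := by
      have h2 : y ⊓ (x ⊓ z) ≤ x ⊓ y :=
        le_inf (inf_le_right.trans inf_le_left) inf_le_left
      have h3 : x ⊓ z ⊓ x = x ⊓ z := by
        rw [inf_right_comm, inf_idem]
      rw [sup_eq_left.mpr h2, h3]
    rw [e1, e2] at h1
    exact h1
  intro y z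
  refine le_antisymm ?_ (sup_le (inf_le_inf_left x le_sup_left)
    (inf_le_inf_left x le_sup_right))
  have step1 : x ⊓ (y ⊔ z) ≤ (x ⊔ y) ⊓ (y ⊔ z) ⊓ (z ⊔ x) :=
    le_inf (le_inf (inf_le_left.trans le_sup_left) inf_le_right)
      (inf_le_left.trans le_sup_right)
  rw [h y z] at step1
  calc x ⊓ (y ⊔ z) ≤ x ⊓ (x ⊓ y ⊔ y ⊓ z ⊔ z ⊓ x) := le_inf inf_le_left step1
    _ = x ⊓ (y ⊓ z ⊔ x ⊓ y ⊔ x ⊓ z) := by rw [inf_comm z x, sup_comm (x ⊓ y) (y ⊓ z)]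
    _ = x ⊓ (y ⊓ z ⊔ x ⊓ y) ⊔ x ⊓ z := key _ z
    _ = x ⊓ (y ⊓ z) ⊔ x ⊓ y ⊔ x ⊓ z := by rw [key (y ⊓ z) y]
    _ ≤ x ⊓ y ⊔ x ⊓ z := by
        refine sup_le (sup_le ?_ le_sup_left) le_sup_right
        exact le_trans (le_inf inf_le_left (inf_le_right.trans inf_le_left)) le_sup_left

/-- An element of a lattice is neutral iff it is simultaneously distributive,
codistributive and modular. -/
theorem statement12 {L : Type*} [Lattice L] (x : L) :
    (∀ y z : L, (x ⊔ y) ⊓ (y ⊔ z) ⊓ (z ⊔ x) = (x ⊓ y) ⊔ (y ⊓ z) ⊔ (z ⊓ x)) ↔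
      ((∀ y z : L, x ⊔ (y ⊓ z) = (x ⊔ y) ⊓ (x ⊔ z)) ∧
        (∀ y z : L, x ⊓ (y ⊔ z) = (x ⊓ y) ⊔ (x ⊓ z)) ∧
        (∀ y z : L, y ≤ z → (x ⊔ y) ⊓ z = (x ⊓ z) ⊔ y)) := by
  constructor
  · intro h
    refine ⟨?_, statement12_aux x h, ?_⟩
    · -- distributive, via order dual
      exact statement12_aux (L := Lᵒᵈ) (OrderDual.toDual x)
        (fun y z => ((h (OrderDual.ofDual y) (OrderDual.ofDual z)).symm))
    · -- modular
      intro y z hyz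
      refine le_antisymm ?_ (sup_le (le_inf (inf_le_left.trans le_sup_left) inf_le_right)
        (le_inf le_sup_right hyz))
      have step1 : (x ⊔ y) ⊓ z ≤ (x ⊔ y) ⊓ (y ⊔ z) ⊓ (z ⊔ x) :=
        le_inf (le_inf inf_le_left (inf_le_right.trans le_sup_right))
          (inf_le_right.trans le_sup_left)
      rw [h y z] at step1
      refine step1.trans (sup_le (sup_le ?_ ?_) ?_)
      · exact (inf_le_right).trans le_sup_right
      · exact (inf_le_left).trans le_sup_right
      · exact le_sup_of_le_left (le_inf inf_le_right inf_le_left)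
  · rintro ⟨D, C, M⟩ y z
    calc (x ⊔ y) ⊓ (y ⊔ z) ⊓ (z ⊔ x)
        = (x ⊔ y) ⊓ (x ⊔ z) ⊓ (y ⊔ z) := by rw [inf_right_comm, sup_comm z x]
      _ = (x ⊔ y ⊓ z) ⊓ (y ⊔ z) := by rw [← D]
      _ = (x ⊓ (y ⊔ z)) ⊔ y ⊓ z := M (y ⊓ z) (y ⊔ z) inf_le_sup
      _ = (x ⊓ y ⊔ x ⊓ z) ⊔ y ⊓ z := by rw [C]
      _ = (x ⊓ y) ⊔ (y ⊓ z) ⊔ (z ⊓ x) := by rw [sup_right_comm, inf_comm z x]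
end

section
/- Let L be a lattice with least element 0, let a be an atom of L which is also a neutral element of L, and let x ∈ L. Then x is a modular element of L if and only if x ∨ a is a modular element of L. -/
section
variable {L : Type*} [Lattice L] (a : L)
variable (hneutral : ∀ y z : L, (a ⊔ y) ⊓ (y ⊔ z) ⊓ (z ⊔ a) = (a ⊓ y) ⊔ (y ⊓ z) ⊔ (z ⊓ a))
include hneutral

lemma aux_hmod2 : ∀ u b : L, b ≤ a → (u ⊔ b) ⊓ a = (u ⊓ a) ⊔ b := by
  intro u b hb
  have h := hneutral u b
  rw [sup_comm b a, sup_eq_left.mpr hb, inf_comm b a, inf_eq_right.mpr hb,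
      inf_right_comm, (inf_eq_right.mpr (le_sup_left : a ≤ a ⊔ u) : (a ⊔ u) ⊓ a = a),
      inf_comm a (u ⊔ b),
      sup_assoc, (sup_eq_right.mpr (inf_le_right : u ⊓ b ≤ b) : u ⊓ b ⊔ b = b),
      inf_comm a u] at h
  exact h

lemma aux_key : ∀ p q : L, p ⊓ a = q ⊓ a → p ⊔ a = q ⊔ a → p ≤ q := by
  intro p q h1 h2
  have h := hneutral q p
  have e1 : q ⊔ p ≤ (a ⊔ q) ⊓ (q ⊔ p) ⊓ (p ⊔ a) := by
    have hp : p ≤ a ⊔ q := by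
      calc p ≤ p ⊔ a := le_sup_left
        _ = q ⊔ a := h2
        _ = a ⊔ q := sup_comm q a
    have hq : q ≤ p ⊔ a := by rw [h2]; exact le_sup_left
    exact le_inf (le_inf (sup_le le_sup_right hp) le_rfl) (sup_le hq le_sup_left)
  have e2 : (a ⊓ q) ⊔ (q ⊓ p) ⊔ (p ⊓ a) ≤ q := by
    refine sup_le (sup_le inf_le_right inf_le_left) ?_
    rw [h1]; exact inf_le_left
  have : q ⊔ p ≤ q := le_trans e1 (h ▸ e2)
  exact le_sup_right.trans this

lemma aux_hinj : ∀ p q : L, p ⊓ a = q ⊓ a → p ⊔ a = q ⊔ a → p = q := fun p q h1 h2 =>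
  le_antisymm (aux_key a hneutral p q h1 h2) (aux_key a hneutral q p h1.symm h2.symm)

lemma aux_hmod2' : ∀ u b : L, a ≤ b → (a ⊔ u) ⊓ b = (u ⊓ b) ⊔ a := by
  intro u b hb
  have h := hneutral u b
  rw [sup_eq_left.mpr hb, inf_comm b a, inf_eq_left.mpr hb,
      inf_assoc, (inf_eq_right.mpr (le_sup_right : b ≤ u ⊔ b) : (u ⊔ b) ⊓ b = b),
      sup_right_comm, (sup_eq_right.mpr (inf_le_left : a ⊓ u ≤ a) : a ⊓ u ⊔ a = a),
      sup_comm a (u ⊓ b)] at h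
  exact h

lemma aux_hdsup : ∀ y z : L, (a ⊔ y) ⊓ (a ⊔ z) = a ⊔ (y ⊓ z) := by
  intro y z
  have h := congrArg (a ⊔ ·) (hneutral y z)
  rw [show a ⊔ ((a ⊓ y) ⊔ (y ⊓ z) ⊔ (z ⊓ a)) = a ⊔ (y ⊓ z) from
        le_antisymm
          (sup_le le_sup_left (sup_le (sup_le (inf_le_left.trans le_sup_left)
            le_sup_right) (inf_le_right.trans le_sup_left)))
          (sup_le le_sup_left ((le_sup_right.trans le_sup_left).trans le_sup_right)),
      sup_comm a ((a ⊔ y) ⊓ (y ⊔ z) ⊓ (z ⊔ a)),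
      ← aux_hmod2' a hneutral ((a ⊔ y) ⊓ (y ⊔ z)) (z ⊔ a) le_sup_right,
      show a ⊔ ((a ⊔ y) ⊓ (y ⊔ z)) = a ⊔ y from
        le_antisymm (sup_le le_sup_left inf_le_left)
          (sup_le le_sup_left
            ((le_inf le_sup_right le_sup_left).trans le_sup_right))] at h
  rw [sup_comm a z]
  exact h

lemma aux_hdinf : ∀ y z : L, a ⊓ (y ⊔ z) = (a ⊓ y) ⊔ (a ⊓ z) := by
  intro y z
  have h := congrArg (· ⊓ a) (hneutral y z)
  -- LHS: ((a⊔y)⊓(y⊔z)⊓(z⊔a))⊓a = (y⊔z)⊓a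
  rw [show (a ⊔ y) ⊓ (y ⊔ z) ⊓ (z ⊔ a) ⊓ a = (y ⊔ z) ⊓ a from
        le_antisymm (inf_le_inf_right a (inf_le_left.trans inf_le_right))
          (le_inf (le_inf (le_inf (inf_le_right.trans le_sup_left) inf_le_left)
            (inf_le_right.trans le_sup_right)) inf_le_right),
      aux_hmod2 a hneutral ((a ⊓ y) ⊔ (y ⊓ z)) (z ⊓ a) inf_le_right,
      sup_comm (a ⊓ y) (y ⊓ z),
      aux_hmod2 a hneutral (y ⊓ z) (a ⊓ y) inf_le_left] at h
  -- h : (y⊔z)⊓a = (y⊓z⊓a ⊔ a⊓y) ⊔ z⊓a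
  rw [show y ⊓ z ⊓ a ⊔ a ⊓ y = a ⊓ y from
        sup_eq_right.mpr (le_inf inf_le_right (inf_le_left.trans inf_le_left))] at h
  rw [inf_comm a (y ⊔ z), h, inf_comm z a]

lemma aux_hcross : ∀ u z : L, (u ⊔ a) ⊓ z = (u ⊓ z) ⊔ (a ⊓ z) := by
  intro u z
  apply aux_hinj a hneutral
  · calc ((u ⊔ a) ⊓ z) ⊓ a = (u ⊔ a) ⊓ (z ⊓ a) := inf_assoc _ _ _
      _ = z ⊓ a := inf_eq_right.mpr (inf_le_right.trans le_sup_right)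
      _ = a ⊓ z := inf_comm z a
      _ = (u ⊓ z ⊓ a) ⊔ (a ⊓ z) := (sup_eq_right.mpr
            (le_inf inf_le_right (inf_le_left.trans inf_le_right))).symm
      _ = ((u ⊓ z) ⊔ (a ⊓ z)) ⊓ a := (aux_hmod2 a hneutral (u ⊓ z) (a ⊓ z) inf_le_left).symm
  · calc ((u ⊔ a) ⊓ z) ⊔ a = a ⊔ ((u ⊔ a) ⊓ z) := sup_comm _ _
      _ = (a ⊔ (u ⊔ a)) ⊓ (a ⊔ z) := (aux_hdsup a hneutral (u ⊔ a) z).symm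
      _ = (a ⊔ u) ⊓ (a ⊔ z) := by
          rw [show a ⊔ (u ⊔ a) = a ⊔ u from
            le_antisymm (sup_le le_sup_left (sup_le le_sup_right le_sup_left))
              (sup_le le_sup_left (le_sup_left.trans le_sup_right))]
      _ = a ⊔ (u ⊓ z) := aux_hdsup a hneutral u z
      _ = (u ⊓ z) ⊔ a := sup_comm _ _
      _ = ((u ⊓ z) ⊔ (a ⊓ z)) ⊔ a := by
          rw [sup_assoc, sup_eq_right.mpr (inf_le_left : a ⊓ z ≤ a)]
end


/-- If `a` is a neutral atom of a lattice with least element, then `x` is a modular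
element iff `x ⊔ a` is a modular element. -/
theorem statement13 {L : Type*} [Lattice L] [OrderBot L] (a x : L)
    (hatom : IsAtom a)
    (hneutral : ∀ y z : L, (a ⊔ y) ⊓ (y ⊔ z) ⊓ (z ⊔ a) = (a ⊓ y) ⊔ (y ⊓ z) ⊔ (z ⊓ a)) :
    (∀ y z : L, y ≤ z → (x ⊔ y) ⊓ z = (x ⊓ z) ⊔ y) ↔
      (∀ y z : L, y ≤ z → ((x ⊔ a) ⊔ y) ⊓ z = ((x ⊔ a) ⊓ z) ⊔ y) := by
  have hcross := aux_hcross a hneutral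
  constructor
  · intro hx y z hyz
    calc ((x ⊔ a) ⊔ y) ⊓ z = ((x ⊔ y) ⊔ a) ⊓ z := by rw [sup_right_comm]
      _ = ((x ⊔ y) ⊓ z) ⊔ (a ⊓ z) := hcross _ _
      _ = ((x ⊓ z) ⊔ y) ⊔ (a ⊓ z) := by rw [hx y z hyz]
      _ = ((x ⊓ z) ⊔ (a ⊓ z)) ⊔ y := by rw [sup_right_comm]
      _ = ((x ⊔ a) ⊓ z) ⊔ y := by rw [hcross]
  · intro hs y z hyz
    have h := hs y z hyz
    have hL : ((x ⊔ a) ⊔ y) ⊓ z = ((x ⊔ y) ⊓ z) ⊔ (a ⊓ z) := by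
      rw [sup_right_comm]; exact hcross _ _
    have hR : ((x ⊔ a) ⊓ z) ⊔ y = ((x ⊓ z) ⊔ y) ⊔ (a ⊓ z) := by
      rw [hcross, sup_right_comm]
    have key : ((x ⊔ y) ⊓ z) ⊔ (a ⊓ z) = ((x ⊓ z) ⊔ y) ⊔ (a ⊓ z) := by
      rw [← hL, h, hR]
    have hQP : (x ⊓ z) ⊔ y ≤ (x ⊔ y) ⊓ z :=
      sup_le (le_inf (inf_le_left.trans le_sup_left) inf_le_right)
        (le_inf le_sup_right hyz)
    rcases hatom.le_iff.mp (inf_le_left : a ⊓ z ≤ a) with h0 | ha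
    · rw [h0, sup_bot_eq, sup_bot_eq] at key; exact key
    · rw [ha] at key
      rcases hatom.le_iff.mp (inf_le_left : a ⊓ ((x ⊓ z) ⊔ y) ≤ a) with hq0 | hq
      · rcases hatom.le_iff.mp (inf_le_left : a ⊓ ((x ⊔ y) ⊓ z) ≤ a) with hp0 | hp
        · exact aux_hinj a hneutral _ _
            (by rw [inf_comm ((x ⊔ y) ⊓ z) a, inf_comm ((x ⊓ z) ⊔ y) a, hp0, hq0]) key
        · exfalso
          have haP : a ≤ (x ⊔ y) ⊓ z := inf_eq_left.mp hp
          have haz : a ≤ z := haP.trans inf_le_right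
          have hsplit : a = (a ⊓ x) ⊔ (a ⊓ y) := by
            rw [← aux_hdinf a hneutral]
            exact (inf_eq_left.mpr (haP.trans inf_le_left)).symm
          have haQ : a ≤ (x ⊓ z) ⊔ y := by
            rcases hatom.le_iff.mp (inf_le_left : a ⊓ y ≤ a) with hy0 | hy
            · have hax : a ≤ x := by
                rw [hy0, sup_bot_eq] at hsplit
                exact inf_eq_left.mp hsplit.symm
              exact (le_inf hax haz).trans le_sup_left
            · exact (inf_eq_left.mp hy).trans le_sup_right
          have : a ⊓ ((x ⊓ z) ⊔ y) = a := inf_eq_left.mpr haQ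
          rw [hq0] at this
          exact hatom.1 this.symm
      · have haQ : a ≤ (x ⊓ z) ⊔ y := inf_eq_left.mp hq
        refine le_antisymm ?_ hQP
        calc (x ⊔ y) ⊓ z ≤ ((x ⊔ y) ⊓ z) ⊔ a := le_sup_left
          _ = ((x ⊓ z) ⊔ y) ⊔ a := key
          _ = (x ⊓ z) ⊔ y := sup_eq_left.mpr haQ
end

section
/- Let L be a lattice with least element 0, let a be an atom of L which is also a neutral element of L, and let x ∈ L. Then x is a distributive element of L if and only if x ∨ a is a distributive element of L. -/
/-- If `a` is a neutral atom of a lattice with least element, then `x` is a distributive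
element iff `x ⊔ a` is a distributive element. -/
theorem statement14 {L : Type*} [Lattice L] [OrderBot L] (a x : L)
    (hatom : IsAtom a)
    (hneutral : ∀ y z : L, (a ⊔ y) ⊓ (y ⊔ z) ⊓ (z ⊔ a) = (a ⊓ y) ⊔ (y ⊓ z) ⊔ (z ⊓ a)) :
    (∀ y z : L, x ⊔ (y ⊓ z) = (x ⊔ y) ⊓ (x ⊔ z)) ↔
      (∀ y z : L, (x ⊔ a) ⊔ (y ⊓ z) = ((x ⊔ a) ⊔ y) ⊓ ((x ⊔ a) ⊔ z)) := by
  -- `a` is a distributive element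
  have hadist : ∀ y z : L, a ⊔ (y ⊓ z) = (a ⊔ y) ⊓ (a ⊔ z) := by
    intro y z
    refine le_antisymm (le_inf (sup_le_sup_left inf_le_left a) (sup_le_sup_left inf_le_right a)) ?_
    have h1 := hneutral y (a ⊔ z)
    have h2 := hneutral y z
    have e1 : (a ⊔ y) ⊓ (y ⊔ (a ⊔ z)) = a ⊔ y :=
      inf_eq_left.mpr (sup_le (le_sup_of_le_right le_sup_left) le_sup_left)
    have e2 : (a ⊔ z) ⊔ a = a ⊔ z := sup_eq_left.mpr le_sup_left
    have e3 : (a ⊔ z) ⊓ a = a := inf_eq_right.mpr le_sup_left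
    rw [e1, e2, e3] at h1
    rw [h1]
    have key : y ⊓ (a ⊔ z) ≤ a ⊔ (y ⊓ z) := by
      have hle : y ⊓ (a ⊔ z) ≤ (a ⊔ y) ⊓ (y ⊔ z) ⊓ (z ⊔ a) := by
        refine le_inf (le_inf (inf_le_left.trans le_sup_right) (inf_le_left.trans le_sup_left)) ?_
        exact inf_le_right.trans (sup_le le_sup_right le_sup_left)
      rw [h2] at hle
      exact hle.trans (sup_le (sup_le (inf_le_left.trans le_sup_left) le_sup_right)
        (inf_le_right.trans le_sup_left))
    exact sup_le (sup_le (inf_le_left.trans le_sup_left) key) le_sup_left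
  -- `a` is dually distributive (one inequality suffices)
  have hdual : ∀ y z : L, a ⊓ (y ⊔ z) ≤ (a ⊓ y) ⊔ (a ⊓ z) := by
    intro y z
    have h1 := hneutral y (a ⊓ z)
    have h2 := hneutral y z
    have e2 : (a ⊓ z) ⊔ a = a := sup_eq_right.mpr inf_le_left
    rw [e2] at h1
    have hstep : a ⊓ (y ⊔ z) ≤ (a ⊔ y) ⊓ (y ⊔ (a ⊓ z)) ⊓ a := by
      have hm : a ⊓ (y ⊔ z) ≤ (a ⊔ y) ⊓ (y ⊔ z) ⊓ (z ⊔ a) :=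
        le_inf (le_inf (inf_le_left.trans le_sup_left) inf_le_right)
          (inf_le_left.trans le_sup_right)
      rw [h2] at hm
      have hm2 : (a ⊓ y) ⊔ (y ⊓ z) ⊔ (z ⊓ a) ≤ y ⊔ (a ⊓ z) :=
        sup_le (sup_le (inf_le_right.trans le_sup_left) (inf_le_left.trans le_sup_left))
          (le_sup_of_le_right (le_inf inf_le_right inf_le_left))
      exact le_inf (le_inf (inf_le_left.trans le_sup_left) (hm.trans hm2)) inf_le_left
    rw [h1] at hstep
    refine hstep.trans (sup_le (sup_le le_sup_left ?_) ?_)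
    · exact le_sup_of_le_right (le_inf (inf_le_right.trans inf_le_left)
        (inf_le_right.trans inf_le_right))
    · exact le_sup_of_le_right inf_le_left
  -- atom splitting
  have hsplit : ∀ t : L, a ≤ t ∨ a ⊓ t = ⊥ := by
    intro t
    rcases eq_or_lt_of_le (inf_le_left : a ⊓ t ≤ a) with h | h
    · exact Or.inl (inf_eq_left.mp h)
    · exact Or.inr (hatom.2 _ h)
  have hatomsup : ∀ y z : L, a ≤ y ⊔ z → a ≤ y ∨ a ≤ z := by
    intro y z hyz
    have hd := hdual y z
    rw [inf_eq_left.mpr hyz] at hd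
    rcases hsplit y with hy | hy
    · exact Or.inl hy
    · rcases hsplit z with hz | hz
      · exact Or.inr hz
      · rw [hy, hz, sup_idem] at hd
        exact absurd (le_bot_iff.mp hd) hatom.1
  constructor
  · intro hx y z
    rw [sup_assoc, hadist y z, hx (a ⊔ y) (a ⊔ z), ← sup_assoc, ← sup_assoc]
  · intro h y z
    set s := x ⊔ (y ⊓ z) with hs
    set w := (x ⊔ y) ⊓ (x ⊔ z) with hw
    have hsw : s ≤ w :=
      sup_le (le_inf le_sup_left le_sup_left)
        (le_inf (le_sup_of_le_right inf_le_left) (le_sup_of_le_right inf_le_right))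
    have hwsa : w ≤ s ⊔ a := by
      have h2 : w ≤ ((x ⊔ a) ⊔ y) ⊓ ((x ⊔ a) ⊔ z) :=
        inf_le_inf (sup_le_sup_right le_sup_left y) (sup_le_sup_right le_sup_left z)
      rw [← h y z] at h2
      calc w ≤ (x ⊔ a) ⊔ (y ⊓ z) := h2
        _ = s ⊔ a := sup_right_comm x a (y ⊓ z)
    refine le_antisymm hsw ?_
    rcases hsplit w with haw | haw
    · -- a ≤ w
      have h1 := hatomsup x y (haw.trans inf_le_left)
      have h2 := hatomsup x z (haw.trans inf_le_right)
      have has : a ≤ s := by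
        rcases h1 with h1 | h1
        · exact h1.trans le_sup_left
        · rcases h2 with h2 | h2
          · exact h2.trans le_sup_left
          · exact (le_inf h1 h2).trans le_sup_right
      exact hwsa.trans (sup_le le_rfl has)
    · -- a ⊓ w = ⊥ : use the median law on (a, w, s)
      have hm := hneutral w s
      have eL : (a ⊔ w) ⊓ (w ⊔ s) ⊓ (s ⊔ a) = w := by
        have e : (a ⊔ w) ⊓ w = w := inf_eq_right.mpr le_sup_right
        rw [sup_eq_left.mpr hsw, e, inf_eq_left.mpr hwsa]
      have eR : (a ⊓ w) ⊔ (w ⊓ s) ⊔ (s ⊓ a) ≤ s := by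
        refine sup_le (sup_le ?_ inf_le_right) ?_
        · rw [haw]; exact bot_le
        · have : s ⊓ a ≤ a ⊓ w := le_inf inf_le_right (inf_le_left.trans hsw)
          rw [haw] at this
          exact this.trans bot_le
      calc w = (a ⊓ w) ⊔ (w ⊓ s) ⊔ (s ⊓ a) := by rw [← hm, eL]
        _ ≤ s := eR
end

section
/- Let L be a lattice with least element 0, let a be an atom of L which is also a neutral element of L, and let x ∈ L. Then x is a lower-modular element of L if and only if x ∨ a is a lower-modular element of L. -/
/-- If `a` is a neutral atom of a lattice with least element, then `x` is a lower-modular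
element iff `x ⊔ a` is a lower-modular element. -/
theorem statement15 {L : Type*} [Lattice L] [OrderBot L] (a x : L)
    (hatom : IsAtom a)
    (hneutral : ∀ y z : L, (a ⊔ y) ⊓ (y ⊔ z) ⊓ (z ⊔ a) = (a ⊓ y) ⊔ (y ⊓ z) ⊔ (z ⊓ a)) :
    (∀ y z : L, x ≤ y → (z ⊓ y) ⊔ x = (z ⊔ x) ⊓ y) ↔
      (∀ y z : L, x ⊔ a ≤ y → (z ⊓ y) ⊔ (x ⊔ a) = (z ⊔ (x ⊔ a)) ⊓ y) := by
  -- If `¬ a ≤ u` then `a ⊓ u = ⊥` since `a` is an atom.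
  have hbot : ∀ u : L, ¬ a ≤ u → a ⊓ u = ⊥ := by
    intro u hu
    exact hatom.2 _ (lt_of_le_of_ne inf_le_left (fun h => hu (h ▸ inf_le_right)))
  -- `a` is standard: `y ⊓ (u ⊔ a) = (y ⊓ u) ⊔ (y ⊓ a)`.
  have hstd : ∀ y u : L, y ⊓ (u ⊔ a) = (y ⊓ u) ⊔ (y ⊓ a) := by
    intro y u
    by_cases hau : a ≤ u
    · rw [sup_eq_left.mpr hau]
      exact (sup_eq_left.mpr (inf_le_inf_left y hau)).symm
    · set m := y ⊓ (u ⊔ a) with hm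
      have hmed := hneutral m u
      have hua : u ⊓ a = ⊥ := by rw [inf_comm]; exact hbot u hau
      have hL : m ≤ (a ⊔ m) ⊓ (m ⊔ u) ⊓ (u ⊔ a) :=
        le_inf (le_inf le_sup_right le_sup_left) inf_le_right
      rw [hmed, hua, sup_bot_eq] at hL
      apply le_antisymm
      · refine hL.trans (sup_le ?_ ?_)
        · exact le_sup_right.trans' (le_inf (inf_le_right.trans inf_le_left) inf_le_left)
        · exact le_sup_left.trans' (inf_le_inf_right u inf_le_left)
      · exact sup_le (le_inf inf_le_left (inf_le_right.trans le_sup_left))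
          (le_inf inf_le_left (inf_le_right.trans le_sup_right))
  -- `a` is prime: `a ≤ u ⊔ v → a ≤ u ∨ a ≤ v`.
  have hprime : ∀ u v : L, a ≤ u ⊔ v → a ≤ u ∨ a ≤ v := by
    intro u v huv
    by_contra hc
    push_neg at hc
    have h1 : a ≤ (a ⊔ u) ⊓ (u ⊔ v) ⊓ (v ⊔ a) := le_inf (le_inf le_sup_left huv) le_sup_right
    rw [hneutral u v, hbot u hc.1, inf_comm v a, hbot v hc.2, bot_sup_eq, sup_bot_eq] at h1
    exact hc.1 (h1.trans inf_le_left)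
  constructor
  · -- forward
    intro h y z hy
    have ha : a ≤ y := le_sup_right.trans hy
    have hx : x ≤ y := le_sup_left.trans hy
    calc (z ⊓ y) ⊔ (x ⊔ a) = ((z ⊓ y) ⊔ x) ⊔ a := by rw [sup_assoc]
      _ = ((z ⊔ x) ⊓ y) ⊔ a := by rw [h y z hx]
      _ = (y ⊓ (z ⊔ x)) ⊔ (y ⊓ a) := by
            rw [inf_comm (z ⊔ x) y, inf_eq_right.mpr ha]
      _ = y ⊓ ((z ⊔ x) ⊔ a) := (hstd y (z ⊔ x)).symm
      _ = (z ⊔ (x ⊔ a)) ⊓ y := by rw [inf_comm, sup_assoc]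
  · -- backward
    intro h y z hy
    apply le_antisymm
    · exact sup_le (le_inf (inf_le_left.trans le_sup_left) inf_le_right)
        (le_inf le_sup_right hy)
    · set t := (z ⊔ x) ⊓ y with htdef
      set s := (z ⊓ y) ⊔ x with hsdef
      have h1 := h (y ⊔ a) z (sup_le_sup hy le_rfl)
      have ht : t ≤ s ⊔ a := by
        have h2 : t ≤ (z ⊔ (x ⊔ a)) ⊓ (y ⊔ a) :=
          inf_le_inf (sup_le_sup_left le_sup_left z) le_sup_left
        rw [← h1, hstd z y] at h2
        refine h2.trans (sup_le (sup_le ?_ ?_) (sup_le ?_ ?_))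
        · exact le_sup_of_le_left le_sup_left
        · exact le_sup_of_le_right inf_le_right
        · exact le_sup_of_le_left le_sup_right
        · exact le_sup_right
      have hts : t = (t ⊓ s) ⊔ (t ⊓ a) := by
        rw [← hstd t s, inf_eq_left.mpr ht]
      by_cases hat : a ≤ t
      · have haz : a ≤ z ⊔ x := hat.trans inf_le_left
        have hay : a ≤ y := hat.trans inf_le_right
        have has : a ≤ s := by
          rcases hprime z x haz with h' | h'
          · exact le_sup_left.trans' (le_inf h' hay)
          · exact le_sup_right.trans' h'
        rw [hts]
        exact sup_le inf_le_right ((inf_le_right).trans has)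
      · rw [hts, inf_comm t a, hbot t hat, sup_bot_eq]
        exact inf_le_right
end

section
/- Let L be a lattice with least element 0, let a be an atom of L which is also a neutral element of L, and let x ∈ L. Then x is an upper-modular element of L if and only if x ∨ a is an upper-modular element of L. -/
/-- If `a` is a neutral atom of a lattice with least element, then `x` is an upper-modular
element iff `x ⊔ a` is an upper-modular element. -/
theorem statement16 {L : Type*} [Lattice L] [OrderBot L] (a x : L)
    (hatom : IsAtom a)
    (hneutral : ∀ y z : L, (a ⊔ y) ⊓ (y ⊔ z) ⊓ (z ⊔ a) = (a ⊓ y) ⊔ (y ⊓ z) ⊔ (z ⊓ a)) :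
    (∀ y z : L, y ≤ x → (z ⊔ y) ⊓ x = (z ⊓ x) ⊔ y) ↔
      (∀ y z : L, y ≤ x ⊔ a → (z ⊔ y) ⊓ (x ⊔ a) = (z ⊓ (x ⊔ a)) ⊔ y) := by
  by_cases hax : a ≤ x
  · rw [sup_eq_left.mpr hax]
  · -- atom fact
    have hbot : ∀ c : L, ¬ a ≤ c → a ⊓ c = ⊥ := fun c h =>
      hatom.2 _ (lt_of_le_of_ne inf_le_left fun he => h (he ▸ inf_le_right))
    -- Lemma S : meet distributes over joins with a
    have hS : ∀ c d : L, d ⊓ (c ⊔ a) = (d ⊓ c) ⊔ (d ⊓ a) := by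
      intro c d
      by_cases hac : a ≤ c
      · rw [sup_eq_left.mpr hac]
        exact le_antisymm le_sup_left (sup_le le_rfl (inf_le_inf_left d hac))
      · apply le_antisymm
        · have h1 : d ⊓ (c ⊔ a) ≤ (a ⊔ d) ⊓ (d ⊔ c) ⊓ (c ⊔ a) :=
            le_inf (le_inf (inf_le_left.trans le_sup_right)
              (inf_le_left.trans le_sup_left)) inf_le_right
          rw [hneutral d c, inf_comm c a, hbot c hac, sup_bot_eq] at h1
          refine h1.trans (sup_le ?_ ?_)
          · rw [inf_comm a d]; exact le_sup_right
          · exact le_sup_left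
        · exact sup_le (inf_le_inf_left d le_sup_left) (inf_le_inf_left d le_sup_right)
    -- Lemma K : an atom below a join is below one of the joinands
    have hK : ∀ y z : L, a ≤ y ⊔ z → a ≤ y ∨ a ≤ z := by
      intro y z h
      by_contra hc
      push_neg at hc
      have h1 : a ≤ (a ⊔ y) ⊓ (y ⊔ z) ⊓ (z ⊔ a) := le_inf (le_inf le_sup_left h) le_sup_right
      rw [hneutral y z, hbot y hc.1, inf_comm z a, hbot z hc.2, bot_sup_eq, sup_bot_eq] at h1
      exact hc.1 (h1.trans inf_le_left)
    have hxa : x ⊓ a = ⊥ := by rw [inf_comm]; exact hbot x hax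
    constructor
    · intro hUM y z hy
      apply le_antisymm
      · set y' := y ⊓ x with hy'
        have hy'x : y' ≤ x := inf_le_right
        have hyya : y ≤ y' ⊔ a := by
          calc y = y ⊓ (x ⊔ a) := (inf_eq_left.mpr hy).symm
            _ = y ⊓ x ⊔ y ⊓ a := hS x y
            _ ≤ y' ⊔ a := sup_le_sup le_rfl inf_le_right
        have key : (z ⊔ y) ⊓ x ≤ (z ⊓ x) ⊔ y' := by
          calc (z ⊔ y) ⊓ x ≤ ((z ⊔ y') ⊔ a) ⊓ x := by
                refine inf_le_inf_right x (sup_le ?_ (hyya.trans ?_))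
                · exact le_sup_left.trans le_sup_left
                · exact sup_le_sup le_sup_right le_rfl
            _ = x ⊓ ((z ⊔ y') ⊔ a) := inf_comm _ _
            _ = x ⊓ (z ⊔ y') ⊔ x ⊓ a := hS _ x
            _ = (z ⊔ y') ⊓ x := by rw [hxa, sup_bot_eq, inf_comm]
            _ = (z ⊓ x) ⊔ y' := hUM y' z hy'x
        have main : (z ⊔ y) ⊓ (x ⊔ a) ≤ ((z ⊓ x) ⊔ y') ⊔ a := by
          calc (z ⊔ y) ⊓ (x ⊔ a) = (z ⊔ y) ⊓ x ⊔ (z ⊔ y) ⊓ a := hS x (z ⊔ y)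
            _ ≤ ((z ⊓ x) ⊔ y') ⊔ a := sup_le_sup key inf_le_right
        by_cases haz : a ≤ z
        · refine main.trans (sup_le (sup_le ?_ ?_) ?_)
          · exact (inf_le_inf_left z le_sup_left).trans le_sup_left
          · exact (inf_le_left : y ⊓ x ≤ y).trans le_sup_right
          · exact (le_inf haz le_sup_right).trans le_sup_left
        · by_cases hay : a ≤ y
          · refine main.trans (sup_le (sup_le ?_ ?_) ?_)
            · exact (inf_le_inf_left z le_sup_left).trans le_sup_left
            · exact (inf_le_left : y ⊓ x ≤ y).trans le_sup_right
            · exact hay.trans le_sup_right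
          · have hzy : ¬ a ≤ z ⊔ y := fun h => (hK z y h).elim haz hay
            have h0 : (z ⊔ y) ⊓ a = ⊥ := by rw [inf_comm]; exact hbot _ hzy
            have hyy : y = y' := by
              have : y ⊓ a = ⊥ := by rw [inf_comm]; exact hbot y hay
              calc y = y ⊓ (x ⊔ a) := (inf_eq_left.mpr hy).symm
                _ = y ⊓ x ⊔ y ⊓ a := hS x y
                _ = y' := by rw [this, sup_bot_eq]
            calc (z ⊔ y) ⊓ (x ⊔ a) = (z ⊔ y) ⊓ x ⊔ (z ⊔ y) ⊓ a := hS x (z ⊔ y)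
              _ = (z ⊔ y) ⊓ x := by rw [h0, sup_bot_eq]
              _ ≤ (z ⊓ x) ⊔ y' := key
              _ ≤ (z ⊓ (x ⊔ a)) ⊔ y := by
                  rw [← hyy]
                  exact sup_le_sup (inf_le_inf_left z le_sup_left) le_rfl
      · exact sup_le (le_inf (inf_le_left.trans le_sup_left) inf_le_right) (le_inf le_sup_right hy)
    · intro hUM y z hy
      have hy' : y ≤ x ⊔ a := hy.trans le_sup_left
      have h1 : (z ⊔ y) ⊓ (x ⊔ a) = (z ⊓ (x ⊔ a)) ⊔ y := hUM y z hy'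
      have h2 : (z ⊔ y) ⊓ x = ((z ⊓ (x ⊔ a)) ⊔ y) ⊓ x := by
        rw [← h1, inf_assoc, inf_of_le_right (le_sup_left : x ≤ x ⊔ a)]
      rw [hS x z] at h2
      by_cases haz : a ≤ z
      · have hza : z ⊓ a = a := inf_eq_right.mpr haz
        rw [hza] at h2
        have : ((z ⊓ x ⊔ a) ⊔ y) ⊓ x = x ⊓ (((z ⊓ x) ⊔ y) ⊔ a) := by
          rw [inf_comm]
          congr 1
          rw [sup_right_comm]
        rw [h2, this, hS _ x, hxa, sup_bot_eq, inf_comm,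
          inf_eq_left.mpr (sup_le inf_le_right hy)]
      · have hza : z ⊓ a = ⊥ := by rw [inf_comm]; exact hbot z haz
        rw [hza, sup_bot_eq] at h2
        rw [h2, inf_eq_left.mpr (sup_le inf_le_right hy)]
end

section
/- Let L be a lattice with least element 0, let a be an atom of L which is also a neutral element of L, and let x ∈ L. Then x is a codistributive element of L if and only if x ∨ a is a codistributive element of L. -/
/-- If `a` is a neutral atom of a lattice with least element, then `x` is a codistributive
element iff `x ⊔ a` is a codistributive element. -/
theorem statement17 {L : Type*} [Lattice L] [OrderBot L] (a x : L)
    (hatom : IsAtom a)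
    (hneutral : ∀ y z : L, (a ⊔ y) ⊓ (y ⊔ z) ⊓ (z ⊔ a) = (a ⊓ y) ⊔ (y ⊓ z) ⊔ (z ⊓ a)) :
    (∀ y z : L, x ⊓ (y ⊔ z) = (x ⊓ y) ⊔ (x ⊓ z)) ↔
      (∀ y z : L, (x ⊔ a) ⊓ (y ⊔ z) = ((x ⊔ a) ⊓ y) ⊔ ((x ⊔ a) ⊓ z)) := by
  -- For any u, either a ≤ u or a ⊓ u = ⊥ (atom property)
  have split : ∀ u : L, a ≤ u ∨ a ⊓ u = ⊥ := by
    intro u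
    rcases eq_or_lt_of_le (inf_le_left : a ⊓ u ≤ a) with h | h
    · exact Or.inl (inf_eq_left.mp h)
    · exact Or.inr (hatom.2 _ h)
  -- a is standard: u ⊓ (a ⊔ v) = (u ⊓ a) ⊔ (u ⊓ v)
  have hstd : ∀ u v : L, u ⊓ (a ⊔ v) = (u ⊓ a) ⊔ (u ⊓ v) := by
    intro u v
    rcases split u with h | h
    · -- a ≤ u
      have hmed := hneutral u v
      rw [sup_eq_right.mpr h, inf_eq_left.mpr h] at hmed
      have h1 : u ⊓ (u ⊔ v) ⊓ (v ⊔ a) = u ⊓ (a ⊔ v) := by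
        rw [inf_eq_left.mpr (le_sup_left : u ≤ u ⊔ v), sup_comm v a]
      rw [h1] at hmed
      have h2 : a ⊔ u ⊓ v ⊔ v ⊓ a = (u ⊓ a) ⊔ (u ⊓ v) := by
        rw [inf_eq_right.mpr h,
          sup_eq_left.mpr (inf_le_right.trans (le_sup_left : a ≤ a ⊔ u ⊓ v))]
      rw [h2] at hmed
      exact hmed
    · rcases split v with hv | hv
      · -- a ≤ v
        rw [sup_eq_right.mpr hv]
        exact (sup_eq_right.mpr (inf_le_inf_left u hv)).symm
      · -- a ⊓ u = ⊥ and a ⊓ v = ⊥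
        have hmed := hneutral v u
        rw [hv, inf_comm u a, h, bot_sup_eq, sup_bot_eq] at hmed
        have hle : u ⊓ (a ⊔ v) ≤ v ⊓ u := by
          rw [← hmed]
          exact le_inf (le_inf (inf_le_right) (inf_le_left.trans le_sup_right))
            (inf_le_left.trans le_sup_left)
        rw [inf_comm u a, h, bot_sup_eq]
        exact le_antisymm (le_inf inf_le_left (hle.trans inf_le_left))
          (inf_le_inf_left u le_sup_right)
  -- atoms split over joins (a is distributive, being neutral)
  have asplit : ∀ y z : L, a ≤ y ⊔ z → a ≤ y ∨ a ≤ z := by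
    intro y z hle
    rcases split y with hy | hy
    · exact Or.inl hy
    rcases split z with hz | hz
    · exact Or.inr hz
    have h1 : a ≤ (a ⊓ y) ⊔ (y ⊓ z) ⊔ (z ⊓ a) := by
      rw [← hneutral y z]
      exact le_inf (le_inf le_sup_left hle) le_sup_right
    rw [hy, inf_comm z a, hz, bot_sup_eq, sup_bot_eq] at h1
    exact Or.inl (h1.trans inf_le_left)
  constructor
  · -- forward
    intro hx y z
    apply le_antisymm
    · have h1 : (x ⊔ a) ⊓ (y ⊔ z) = (a ⊓ (y ⊔ z)) ⊔ ((x ⊓ y) ⊔ (x ⊓ z)) := by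
        rw [sup_comm x a, inf_comm (a ⊔ x) (y ⊔ z), hstd (y ⊔ z) x,
          inf_comm (y ⊔ z) a, inf_comm (y ⊔ z) x, hx y z]
      rw [h1]
      apply sup_le
      ·  -- a ⊓ (y ⊔ z) ≤ RHS
        rcases split (y ⊔ z) with h | h
        · rw [inf_eq_left.mpr h]
          rcases asplit y z h with ha | ha
          · exact le_sup_of_le_left (le_inf le_sup_right ha)
          · exact le_sup_of_le_right (le_inf le_sup_right ha)
        · rw [h]; exact bot_le
      · exact sup_le_sup (inf_le_inf_right y le_sup_left) (inf_le_inf_right z le_sup_left)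
    · exact sup_le (inf_le_inf_left _ le_sup_left) (inf_le_inf_left _ le_sup_right)
  · -- reverse
    intro h y z
    rcases split x with hax | hax
    · -- a ≤ x : x ⊔ a = x
      have hxa : x ⊔ a = x := sup_eq_left.mpr hax
      have := h y z
      rwa [hxa] at this
    · apply le_antisymm
      · set S := (x ⊓ y) ⊔ (x ⊓ z) with hS
        have h1 : x ⊓ (y ⊔ z) ≤ (x ⊔ a) ⊓ (y ⊔ z) :=
          inf_le_inf_right _ le_sup_left
        have h2 : (x ⊔ a) ⊓ (y ⊔ z) ≤ a ⊔ S := by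
          rw [h y z, inf_comm (x ⊔ a) y, inf_comm (x ⊔ a) z, sup_comm x a,
            hstd y x, hstd z x]
          apply sup_le <;> apply sup_le
          · exact le_sup_of_le_left inf_le_right
          · rw [inf_comm]; exact le_sup_of_le_right le_sup_left
          · exact le_sup_of_le_left inf_le_right
          · rw [inf_comm]; exact le_sup_of_le_right le_sup_right
        have h3 : x ⊓ (y ⊔ z) ≤ x ⊓ (a ⊔ S) := le_inf inf_le_left (h1.trans h2)
        rw [hstd x S, inf_comm x a, hax, bot_sup_eq] at h3
        exact h3.trans inf_le_right
      · exact sup_le (inf_le_inf_left _ le_sup_left) (inf_le_inf_left _ le_sup_right)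
end
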